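/- arXiv:2109.11387 — 10 statements merged into one kernel-verified Lean document; each statement's English description precedes it below -/
import Mathlib

section
/- Let B be a (ℂ[d],S)-bimodule that is finitely generated as a right S-module and on which d acts locally ad-nilpotently. Endow H = Hom_S(B,S), the group of right S-module homomorphisms B → S, with the (S,ℂ[d])-bimodule structure given by (s·φ)(x) = s·φ(x) and (φ·d)(x) = φ(d·x). Then the operator ad(d) on H, defined by ((ad d)(φ))(x) = d·φ(x) − φ(d·x), is locally nilpotent: every φ ∈ H is annihilated by some power of ad(d). If moreover S is left noetherian, then H is finitely generated as a left S-module. -/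
/-! STATEMENT 6: with `S`, `d`, `B` as above, on `H = Hom_S(B,S)` (right `S`-module
maps) the operator `ad(d) : φ ↦ (x ↦ d·φ(x) - φ(d·x))` is locally nilpotent; and if
`S` is left noetherian then `H` is finitely generated as a left `S`-module. -/

open Polynomial MulOpposite

set_option linter.unusedSectionVars false

noncomputable section

section Aux

variable {S : Type} [Ring S] [Algebra ℂ S] (d : S)
variable (B : Type) [AddCommGroup B] [Module (Polynomial ℂ) B] [Module Sᵐᵒᵖ B]
  [SMulCommClass (Polynomial ℂ) Sᵐᵒᵖ B]

/-- The operator `ad(d)` on `H = Hom_S(B,S)`, as a map of linear maps. -/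
def Tad (φ : B →ₗ[Sᵐᵒᵖ] S) : B →ₗ[Sᵐᵒᵖ] S where
  toFun x := d * φ x - φ ((X : Polynomial ℂ) • x)
  map_add' x y := by simp [mul_add]; abel
  map_smul' s x := by
    simp only [map_smul, RingHom.id_apply, smul_comm ((X : Polynomial ℂ)) s x]
    simp [MulOpposite.smul_eq_mul_unop, mul_sub, sub_mul, mul_assoc]

@[simp] lemma Tad_apply (φ : B →ₗ[Sᵐᵒᵖ] S) (x : B) :
    Tad d B φ x = d * φ x - φ ((X : Polynomial ℂ) • x) := rfl

lemma Tad_apply' (φ : B →ₗ[Sᵐᵒᵖ] S) (x : B) :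
    Tad d B φ x = (d * φ x - φ x * d) - φ ((X : Polynomial ℂ) • x - op d • x) := by
  have h : φ (op d • x) = φ x * d := by rw [map_smul]; rfl
  simp [map_sub, h]

/-- Iterating the raw functional operator agrees with iterating `Tad`. -/
lemma iter_Tad (φ : B →ₗ[Sᵐᵒᵖ] S) (n : ℕ) :
    (fun (ψ : B → S) => fun x => d * ψ x - ψ ((X : Polynomial ℂ) • x))^[n] ⇑φ
      = ⇑((Tad d B)^[n] φ) := by
  induction n with
  | zero => rfl
  | succ n ih =>
    rw [Function.iterate_succ_apply', Function.iterate_succ_apply', ih]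
    rfl

/-- Key: if `δ = X• - (op d)•` kills `x` after `K` steps, then for every `φ` the iterates
`Tad^[n] φ` eventually vanish at `x`. -/
lemma key (hS : ∀ a : S, ∃ n : ℕ, (fun a => d * a - a * d)^[n] a = 0) :
    ∀ K : ℕ, ∀ x : B, (fun m => (X : Polynomial ℂ) • m - op d • m)^[K] x = 0 →
    ∀ φ : B →ₗ[Sᵐᵒᵖ] S, ∃ M : ℕ, ∀ n ≥ M, ((Tad d B)^[n] φ) x = 0 := by
  intro K
  induction K with
  | zero =>
    intro x hx φ
    simp only [Function.iterate_zero, id] at hx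
    exact ⟨0, fun n _ => by simp [hx]⟩
  | succ K ih =>
    intro x hx φ
    set δx : B := (X : Polynomial ℂ) • x - op d • x with hδx
    have hx' : (fun m => (X : Polynomial ℂ) • m - op d • m)^[K] δx = 0 := by
      rw [← Function.iterate_succ_apply]; exact hx
    obtain ⟨M, hM⟩ := ih δx hx' φ
    -- for n ≥ M, Tad^[n+1] φ x = ad (Tad^[n] φ x)
    have hstep : ∀ n ≥ M, ((Tad d B)^[n+1] φ) x
        = d * ((Tad d B)^[n] φ) x - ((Tad d B)^[n] φ) x * d := by
      intro n hn
      rw [Function.iterate_succ_apply', Tad_apply', ← hδx, hM n hn, sub_zero]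
    obtain ⟨m, hm⟩ := hS (((Tad d B)^[M] φ) x)
    refine ⟨M + m, fun n hn => ?_⟩
    obtain ⟨j, rfl⟩ := Nat.exists_eq_add_of_le (le_trans (Nat.le_add_right M m) hn)
    have hj : m ≤ j := by omega
    have hiter : ∀ j : ℕ, ((Tad d B)^[M + j] φ) x
        = (fun a => d * a - a * d)^[j] (((Tad d B)^[M] φ) x) := by
      intro j
      induction j with
      | zero => rfl
      | succ j ihj =>
        rw [show M + (j+1) = (M + j) + 1 from rfl,
          hstep (M + j) (Nat.le_add_right M j), ihj, Function.iterate_succ_apply']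
    rw [hiter j]
    obtain ⟨i, rfl⟩ := Nat.exists_eq_add_of_le hj
    rw [add_comm m i, Function.iterate_add_apply, hm]
    exact Function.iterate_fixed (by simp) i

end Aux

theorem stmt_6 {S : Type} [Ring S] [Algebra ℂ S] (d : S)
    -- `d` acts locally ad-nilpotently on `S`
    (hS : ∀ a : S, ∃ n : ℕ, (fun a => d * a - a * d)^[n] a = 0)
    -- `B` is a `(ℂ[d],S)`-bimodule, finitely generated as a right `S`-module, on which `d`
    -- acts locally ad-nilpotently
    (B : Type) [AddCommGroup B] [Module (Polynomial ℂ) B] [Module Sᵐᵒᵖ B]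
    [SMulCommClass (Polynomial ℂ) Sᵐᵒᵖ B]
    [Module.Finite Sᵐᵒᵖ B]
    (hB : ∀ m : B, ∃ n : ℕ, (fun m => (X : Polynomial ℂ) • m - op d • m)^[n] m = 0) :
    -- (1) `ad(d) : φ ↦ (x ↦ d·φ(x) - φ(d·x))` is locally nilpotent on `H = Hom_S(B,S)`
    (∀ φ : B →ₗ[Sᵐᵒᵖ] S,
      ∃ n : ℕ, (fun (ψ : B → S) => fun x => d * ψ x - ψ ((X : Polynomial ℂ) • x))^[n] ⇑φ = 0) ∧
    -- (2) if `S` is left noetherian then `H` is finitely generated as a left `S`-module,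
    -- where `(s·φ)(x) = s·φ(x)`
    (IsNoetherian S S → Module.Finite S (B →ₗ[Sᵐᵒᵖ] S)) := by
  obtain ⟨s, hs⟩ := Module.Finite.fg_top (R := Sᵐᵒᵖ) (M := B)
  constructor
  · intro φ
    have hall : ∀ x : B, ∃ M : ℕ, ∀ n ≥ M, ((Tad d B)^[n] φ) x = 0 := fun x => by
      obtain ⟨K, hK⟩ := hB x
      exact key d B hS K x hK φ
    set g : B → ℕ := fun x => Classical.choose (hall x) with hg
    refine ⟨s.sup g, ?_⟩
    rw [iter_Tad]
    have hzero : (Tad d B)^[s.sup g] φ = 0 := by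
      apply LinearMap.ext_on hs
      intro x hxs
      exact Classical.choose_spec (hall x) _ (Finset.le_sup (f := g) hxs)
    rw [hzero]; rfl
  · intro hNoeth
    haveI : IsNoetherian S S := hNoeth
    let ev : (B →ₗ[Sᵐᵒᵖ] S) →ₗ[S] (s → S) :=
      { toFun := fun φ i => φ i
        map_add' := fun φ ψ => rfl
        map_smul' := fun c φ => rfl }
    have hinj : Function.Injective ev := by
      intro φ ψ h
      apply LinearMap.ext_on hs
      intro x hxs
      exact congrFun h ⟨x, hxs⟩
    haveI : IsNoetherian S (B →ₗ[Sᵐᵒᵖ] S) := isNoetherian_of_injective ev hinj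
    infer_instance

end
end

section
/- Let A and S be rings, let d_A ∈ A act locally ad-nilpotently on A, and let d_S ∈ S act locally ad-nilpotently on S. Let B be an (A,S)-bimodule that is finitely generated as a right S-module and on which d acts locally ad-nilpotently, i.e., every b ∈ B is annihilated by some power of the additive map ad d : b ↦ d_A·b − b·d_S. Let L be a right S-module in which every element is annihilated by some power of d_S. Then for every homomorphism of right S-modules θ : B → L there exists j ≥ 0 such that θ(d_A^j · b) = 0 for all b ∈ B; equivalently, the right action of d on Hom_S(B,L) given by (θ·d)(b) = θ(d_A·b) is locally nilpotent. -/
/-!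
Write `ad d (b) = d_A·b - b·d_S`. Since `d_A^(m+1)·b = d_A^m·(ad d (b)) + (d_A^m·b)·d_S` and `θ` is
right `S`-linear, induction on the nilpotency index of `ad d` at `b` shows that
`θ(d_A^(N+k)·b) = θ(d_A^N·b)·d_S^k` for large `N`, which vanishes for large `k` because `d_S`
acts locally nilpotently on `L`. So each `b` has `θ(d_A^m·b) = 0` for all large `m`, and it
suffices to take `m` large enough for a finite set of generators of `B` over `S`.
-/

open MulOpposite Filter

theorem Module.Finite.eventually_eq_zero_of_forall_eventually_apply_eq_zero {R M N : Type*}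
    [Semiring R] [AddCommMonoid M] [Module R M] [Module.Finite R M] [AddCommMonoid N]
    [Module R N] {ι : Type*} {l : Filter ι} (f : ι → M →ₗ[R] N)
    (h : ∀ x, ∀ᶠ i in l, f i x = 0) : ∀ᶠ i in l, f i = 0 := by
  obtain ⟨s, hs⟩ := Module.Finite.fg_top (R := R) (M := M)
  filter_upwards [(eventually_all_finset s).2 fun x _ => h x] with i hi
  exact LinearMap.ext_on hs fun x hx => hi x hx

section Bimodule

variable {A S B L : Type*} [Ring A] [Ring S] [AddCommGroup B] [Module A B] [Module Sᵐᵒᵖ B]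
  [SMulCommClass A Sᵐᵒᵖ B] [AddCommGroup L] [Module Sᵐᵒᵖ L] (θ : B →ₗ[Sᵐᵒᵖ] L) {dA : A} {dS : S}

theorem map_pow_succ_smul (m : ℕ) (b : B) :
    θ (dA ^ (m + 1) • b) = θ (dA ^ m • (dA • b - op dS • b)) + op dS • θ (dA ^ m • b) := by
  rw [smul_sub, map_sub, smul_comm (dA ^ m) (op dS) b, θ.map_smul, pow_succ, mul_smul,
    sub_add_cancel]

theorem eventually_map_pow_smul_eq_zero (hL : ∀ x : L, ∃ n : ℕ, op dS ^ n • x = 0) {n : ℕ}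
    (b : B) (hb : (fun b => dA • b - op dS • b)^[n] b = 0) :
    ∀ᶠ m in atTop, θ (dA ^ m • b) = 0 := by
  induction n generalizing b with
  | zero => simp [show b = 0 from hb]
  | succ n ih =>
    obtain ⟨N, hN⟩ := eventually_atTop.1 (ih _ hb)
    obtain ⟨k, hk⟩ := hL (θ (dA ^ N • b))
    have shift : ∀ i, θ (dA ^ (N + i) • b) = op dS ^ i • θ (dA ^ N • b) := by
      intro i
      induction i with
      | zero => simp
      | succ i ih =>
        rw [← add_assoc, map_pow_succ_smul, hN _ (Nat.le_add_right N i), zero_add, ih,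
          ← mul_smul, ← pow_succ']
    refine eventually_atTop.2 ⟨N + k, fun m hm => ?_⟩
    obtain ⟨i, rfl⟩ := Nat.exists_eq_add_of_le hm
    rw [show N + k + i = N + (i + k) by omega, shift, pow_add, mul_smul, hk, smul_zero]

end Bimodule

theorem stmt_7_general {A S : Type*} [Ring A] [Ring S] (dA : A) (dS : S)
    -- `B` is an `(A,S)`-bimodule (left `A`-module, right `S`-module, commuting actions),
    -- finitely generated as a right `S`-module
    (B : Type*) [AddCommGroup B] [Module A B] [Module Sᵐᵒᵖ B] [SMulCommClass A Sᵐᵒᵖ B]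
    [Module.Finite Sᵐᵒᵖ B]
    -- on which `d` acts locally ad-nilpotently: `(ad d)(b) = d_A·b - b·d_S`
    (hB : ∀ b : B, ∃ n : ℕ, (fun b => dA • b - op dS • b)^[n] b = 0)
    -- `L` is a right `S`-module, every element annihilated by some power of `d_S`
    (L : Type*) [AddCommGroup L] [Module Sᵐᵒᵖ L]
    (hL : ∀ x : L, ∃ n : ℕ, (op dS ^ n) • x = 0)
    -- `θ : B → L` is a homomorphism of right `S`-modules
    (θ : B →ₗ[Sᵐᵒᵖ] L) :
    ∃ j : ℕ, ∀ b : B, θ (dA ^ j • b) = 0 := by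
  have hθ : ∀ᶠ m in atTop, θ ∘ₗ DistribSMul.toLinearMap Sᵐᵒᵖ B (dA ^ m) = 0 :=
    Module.Finite.eventually_eq_zero_of_forall_eventually_apply_eq_zero _ fun b =>
      let ⟨_, hn⟩ := hB b
      eventually_map_pow_smul_eq_zero θ hL b hn
  obtain ⟨j, hj⟩ := hθ.exists
  exact ⟨j, LinearMap.congr_fun hj⟩

theorem stmt_7 {A S : Type*} [Ring A] [Ring S] (dA : A) (dS : S)
    -- `d_A` acts locally ad-nilpotently on `A`, and `d_S` on `S`
    (hA : ∀ a : A, ∃ n : ℕ, (fun a => dA * a - a * dA)^[n] a = 0)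
    (hS : ∀ s : S, ∃ n : ℕ, (fun s => dS * s - s * dS)^[n] s = 0)
    -- `B` is an `(A,S)`-bimodule (left `A`-module, right `S`-module, commuting actions),
    -- finitely generated as a right `S`-module
    (B : Type*) [AddCommGroup B] [Module A B] [Module Sᵐᵒᵖ B] [SMulCommClass A Sᵐᵒᵖ B]
    [Module.Finite Sᵐᵒᵖ B]
    -- on which `d` acts locally ad-nilpotently: `(ad d)(b) = d_A·b - b·d_S`
    (hB : ∀ b : B, ∃ n : ℕ, (fun b => dA • b - op dS • b)^[n] b = 0)
    -- `L` is a right `S`-module, every element annihilated by some power of `d_S`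
    (L : Type*) [AddCommGroup L] [Module Sᵐᵒᵖ L]
    (hL : ∀ x : L, ∃ n : ℕ, (op dS ^ n) • x = 0)
    -- `θ : B → L` is a homomorphism of right `S`-modules
    (θ : B →ₗ[Sᵐᵒᵖ] L) :
    ∃ j : ℕ, ∀ b : B, θ (dA ^ j • b) = 0 :=
  stmt_7_general dA dS B hB L hL θ
end

section
/- Let X and Y be rings, let d_X ∈ X act locally ad-nilpotently on X and d_Y ∈ Y act locally ad-nilpotently on Y, and let B ≠ 0 be an (X,Y)-bimodule on which d acts locally ad-nilpotently. Call an element b ∈ B left d-torsion if d_X^n·b = 0 for some n ≥ 1, and right d-torsion if b·d_Y^n = 0 for some n ≥ 1. Then: (1) if B has no nonzero left d-torsion element then it has no nonzero right d-torsion element, and vice versa; (2) if every element of B is left d-torsion then every element of B is right d-torsion, and vice versa. -/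
/-!
STATEMENT 8: let `X`, `Y` be rings, `d_X ∈ X`, `d_Y ∈ Y` acting locally ad-nilpotently, and
`B ≠ 0` an `(X,Y)`-bimodule on which `d` acts locally ad-nilpotently.  Then (1) `B` has no
nonzero left `d`-torsion element iff it has no nonzero right `d`-torsion element, and
(2) every element of `B` is left `d`-torsion iff every element is right `d`-torsion.
-/

open MulOpposite

lemma key_lemma {B : Type*} [AddCommGroup B] (u v : Module.End ℤ B)
    (huv : Commute u v) (b : B) {N n : ℕ} (hv : (v ^ N) b = 0) (hu : (u ^ n) b = 0) :
    ((u + v) ^ (n + N)) b = 0 := by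
  rw [huv.add_pow]
  rw [LinearMap.coe_sum, Finset.sum_apply]
  apply Finset.sum_eq_zero
  intro k hk
  simp only [Finset.mem_range, Nat.lt_succ_iff] at hk
  have hcast : ((((n + N).choose k : ℕ) : Module.End ℤ B)) b = ((n + N).choose k) • b := rfl
  rw [Module.End.mul_apply, Module.End.mul_apply, hcast, map_nsmul, map_nsmul]
  by_cases h : N ≤ n + N - k
  · have : (v ^ (n + N - k)) b = 0 := by
      rw [← Nat.sub_add_cancel h, pow_add, Module.End.mul_apply, hv, map_zero]
    rw [this, map_zero, smul_zero]
  · have hkn : n ≤ k := by omega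
    have hc : u ^ k * v ^ (n + N - k) = v ^ (n + N - k) * u ^ k :=
      (huv.pow_pow k (n + N - k))
    have : (u ^ k) ((v ^ (n + N - k)) b) = (v ^ (n + N - k)) ((u ^ k) b) := by
      have := congrArg (fun f => f b) hc
      simpa using this
    rw [this]
    have : (u ^ k) b = 0 := by
      rw [← Nat.sub_add_cancel hkn, pow_add, Module.End.mul_apply, hu, map_zero]
    rw [this, map_zero, smul_zero]

lemma transfer {B : Type*} [AddCommGroup B] (u v : Module.End ℤ B)
    (huv : Commute u v) (hv : ∀ b : B, ∃ N : ℕ, (v ^ N) b = 0) (b : B)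
    (h : ∃ n : ℕ, 1 ≤ n ∧ (u ^ n) b = 0) :
    ∃ m : ℕ, 1 ≤ m ∧ ((u + v) ^ m) b = 0 := by
  obtain ⟨n, hn1, hn⟩ := h
  obtain ⟨N, hN⟩ := hv b
  exact ⟨n + N, le_trans hn1 (Nat.le_add_right n N), key_lemma u v huv b hN hn⟩

theorem stmt_8 {X Y : Type*} [Ring X] [Ring Y] (dX : X) (dY : Y)
    -- `d_X` acts locally ad-nilpotently on `X`, and `d_Y` on `Y`
    (hX : ∀ a : X, ∃ n : ℕ, (fun a => dX * a - a * dX)^[n] a = 0)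
    (hY : ∀ a : Y, ∃ n : ℕ, (fun a => dY * a - a * dY)^[n] a = 0)
    -- `B ≠ 0` is an `(X,Y)`-bimodule on which `d` acts locally ad-nilpotently
    (B : Type*) [AddCommGroup B] [Module X B] [Module Yᵐᵒᵖ B] [SMulCommClass X Yᵐᵒᵖ B]
    [Nontrivial B]
    (hB : ∀ b : B, ∃ n : ℕ, (fun b => dX • b - op dY • b)^[n] b = 0) :
    -- (1) no nonzero left `d`-torsion element iff no nonzero right `d`-torsion element
    ((∀ b : B, (∃ n : ℕ, 1 ≤ n ∧ dX ^ n • b = 0) → b = 0) ↔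
      (∀ b : B, (∃ n : ℕ, 1 ≤ n ∧ (op dY ^ n) • b = 0) → b = 0)) ∧
    -- (2) every element left `d`-torsion iff every element right `d`-torsion
    ((∀ b : B, ∃ n : ℕ, 1 ≤ n ∧ dX ^ n • b = 0) ↔
      (∀ b : B, ∃ n : ℕ, 1 ≤ n ∧ (op dY ^ n) • b = 0)) := by
  -- left and right multiplication operators
  set l : Module.End ℤ B := AddMonoidHom.toIntLinearMap (DistribSMul.toAddMonoidHom B dX)
    with hl_def
  set r : Module.End ℤ B := AddMonoidHom.toIntLinearMap (DistribSMul.toAddMonoidHom B (op dY))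
    with hr_def
  have hlb : ∀ b : B, l b = dX • b := fun b => rfl
  have hrb : ∀ b : B, r b = op dY • b := fun b => rfl
  have hlpow : ∀ (n : ℕ) (b : B), (l ^ n) b = dX ^ n • b := by
    intro n
    induction n with
    | zero => intro b; simp
    | succ n ih =>
      intro b
      rw [pow_succ', Module.End.mul_apply, hlb, ih, pow_succ', mul_smul]
  have hrpow : ∀ (n : ℕ) (b : B), (r ^ n) b = (op dY) ^ n • b := by
    intro n
    induction n with
    | zero => intro b; simp
    | succ n ih =>
      intro b
      rw [pow_succ', Module.End.mul_apply, hrb, ih, pow_succ', mul_smul]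
  have hcomm : Commute l r := by
    ext b
    simp only [Module.End.mul_apply, hlb, hrb]
    exact smul_comm dX (op dY) b
  set δ : Module.End ℤ B := l - r with hδ_def
  have hδpow : ∀ b : B, ∃ N : ℕ, (δ ^ N) b = 0 := by
    intro b
    obtain ⟨N, hN⟩ := hB b
    refine ⟨N, ?_⟩
    rw [Module.End.pow_apply]
    have : ⇑δ = fun b : B => dX • b - op dY • b := by
      funext c
      simp [hδ_def, hlb, hrb]
    rw [this]
    exact hN
  have hnegδpow : ∀ b : B, ∃ N : ℕ, ((-δ) ^ N) b = 0 := by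
    intro b
    obtain ⟨N, hN⟩ := hδpow b
    refine ⟨N, ?_⟩
    rw [neg_pow, Module.End.mul_apply, hN, map_zero]
  have hcommδr : Commute r δ := hcomm.symm.sub_right (Commute.refl r)
  have hcommlδ : Commute l (-δ) := ((Commute.refl l).sub_right hcomm).neg_right
  have hrδ : r + δ = l := by rw [hδ_def]; abel
  have hlδ : l + (-δ) = r := by rw [hδ_def]; abel
  -- left torsion → right torsion
  have LtoR : ∀ b : B, (∃ n : ℕ, 1 ≤ n ∧ dX ^ n • b = 0) →
      ∃ m : ℕ, 1 ≤ m ∧ (op dY) ^ m • b = 0 := by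
    intro b hb
    obtain ⟨n, hn1, hn⟩ := hb
    have : ∃ m : ℕ, 1 ≤ m ∧ ((l + (-δ)) ^ m) b = 0 :=
      transfer l (-δ) hcommlδ hnegδpow b ⟨n, hn1, by rw [hlpow]; exact hn⟩
    obtain ⟨m, hm1, hm⟩ := this
    exact ⟨m, hm1, by rw [← hrpow, ← hlδ]; exact hm⟩
  have RtoL : ∀ b : B, (∃ n : ℕ, 1 ≤ n ∧ (op dY) ^ n • b = 0) →
      ∃ m : ℕ, 1 ≤ m ∧ dX ^ m • b = 0 := by
    intro b hb
    obtain ⟨n, hn1, hn⟩ := hb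
    have : ∃ m : ℕ, 1 ≤ m ∧ ((r + δ) ^ m) b = 0 :=
      transfer r δ hcommδr hδpow b ⟨n, hn1, by rw [hrpow]; exact hn⟩
    obtain ⟨m, hm1, hm⟩ := this
    exact ⟨m, hm1, by rw [← hlpow, ← hrδ]; exact hm⟩
  constructor
  · constructor
    · intro h b hb
      exact h b (RtoL b hb)
    · intro h b hb
      exact h b (LtoR b hb)
  · constructor
    · intro h b
      exact LtoR b (h b)
    · intro h b
      exact RtoL b (h b)
end

section
/- Let S be a left noetherian ring and let d_S ∈ S act locally ad-nilpotently on S. Let A be a simple ring (nonzero, with no two-sided ideals other than 0 and A) and let d_A ∈ A act locally ad-nilpotently on A, with d_A a regular element of A (neither a left nor a right zero-divisor). Let B ≠ 0 be an (S,A)-bimodule that is finitely generated as a left S-module and on which d acts locally ad-nilpotently, i.e., every b ∈ B is annihilated by some power of ad d : b ↦ d_S·b − b·d_A. Then B is d-torsionfree on both sides: for b ∈ B, if b·d_A^n = 0 for some n then b = 0, and if d_S^n·b = 0 for some n then b = 0. -/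
/-!
STATEMENT 9: let `S` be a left noetherian ring with `d_S` acting locally ad-nilpotently, `A`
a simple ring with `d_A` a regular element acting locally ad-nilpotently, and `B ≠ 0` an
`(S,A)`-bimodule, finitely generated as a left `S`-module, on which `d` acts locally
ad-nilpotently.  Then `B` is `d`-torsionfree on both sides.
-/

open MulOpposite

theorem stmt_9 {S A : Type*} [Ring S] [Ring A]
    -- `S` is left noetherian
    (hnoeth : IsNoetherian S S)
    (dS : S)
    -- `d_S` acts locally ad-nilpotently on `S`
    (hS : ∀ s : S, ∃ n : ℕ, (fun s => dS * s - s * dS)^[n] s = 0)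
    -- `A` is a simple ring (nonzero, no two-sided ideals other than `0` and `A`)
    [IsSimpleRing A]
    (dA : A)
    -- `d_A` acts locally ad-nilpotently on `A`
    (hA : ∀ a : A, ∃ n : ℕ, (fun a => dA * a - a * dA)^[n] a = 0)
    -- `d_A` is regular: neither a left nor a right zero-divisor
    (hreg₁ : ∀ x : A, dA * x = 0 → x = 0) (hreg₂ : ∀ x : A, x * dA = 0 → x = 0)
    -- `B ≠ 0` is an `(S,A)`-bimodule, finitely generated as a left `S`-module
    (B : Type*) [AddCommGroup B] [Module S B] [Module Aᵐᵒᵖ B] [SMulCommClass S Aᵐᵒᵖ B]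
    [Nontrivial B] [Module.Finite S B]
    -- on which `d` acts locally ad-nilpotently: `(ad d)(b) = d_S·b - b·d_A`
    (hB : ∀ b : B, ∃ n : ℕ, (fun b => dS • b - op dA • b)^[n] b = 0) :
    -- `B` is `d`-torsionfree on both sides
    (∀ (b : B) (n : ℕ), (op dA ^ n) • b = 0 → b = 0) ∧
    (∀ (b : B) (n : ℕ), dS ^ n • b = 0 → b = 0) := by
  classical
  set δA : A → A := fun a => dA * a - a * dA with hδA
  -- monotonicity of torsion
  have mono : ∀ (g : B) (n m : ℕ), n ≤ m → (op dA) ^ n • g = 0 → (op dA) ^ m • g = 0 := by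
    intro g n m hnm h
    obtain ⟨k, rfl⟩ := Nat.exists_eq_add_of_le hnm
    rw [add_comm, pow_add, mul_smul, h, smul_zero]
  -- the right torsion submodule
  let T : Submodule S B :=
    { carrier := {b | ∃ n : ℕ, (op dA) ^ n • b = 0}
      zero_mem' := ⟨0, smul_zero _⟩
      add_mem' := by
        rintro b c ⟨m, hm⟩ ⟨n, hn⟩
        exact ⟨m + n, by rw [smul_add, mono b m (m+n) (Nat.le_add_right _ _) hm,
          mono c n (m+n) (Nat.le_add_left _ _) hn, add_zero]⟩
      smul_mem' := by
        rintro c b ⟨n, hn⟩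
        refine ⟨n, ?_⟩
        rw [show ((op dA) ^ n : Aᵐᵒᵖ) • c • b = c • ((op dA) ^ n • b)
          from (smul_comm c _ b).symm, hn, smul_zero] }
  have memT : ∀ b : B, b ∈ T ↔ ∃ n : ℕ, (op dA) ^ n • b = 0 := fun b => Iff.rfl
  -- T is closed under the right A-action
  have hTa : ∀ (K : ℕ) (a : A), δA^[K] a = 0 → ∀ t ∈ T, op a • t ∈ T := by
    intro K
    induction K with
    | zero =>
      intro a ha t _
      simp only [Function.iterate_zero, id_eq] at ha
      subst ha
      simpa using T.zero_mem
    | succ K ih =>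
      intro a ha
      have inner : ∀ (n : ℕ) (t : B), (op dA) ^ n • t = 0 → op a • t ∈ T := by
        intro n
        induction n with
        | zero =>
          intro t hn
          rw [pow_zero, one_smul] at hn; subst hn
          simpa using T.zero_mem
        | succ n ihn =>
          intro t hn
          have h1 : (op dA) ^ n • (op dA • t) = 0 := by
            rw [← mul_smul, ← pow_succ]; exact hn
          have h2 : op a • (op dA • t) ∈ T := ihn (op dA • t) h1
          have h3 : op (δA a) • t ∈ T :=
            ih (δA a) (by rw [← Function.iterate_succ_apply]; exact ha) t ⟨n + 1, hn⟩
          have key : op dA • (op a • t) = op a • (op dA • t) - op (δA a) • t := by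
            rw [← mul_smul, ← mul_smul]
            have : op dA * op a = op a * op dA - op (δA a) := by
              simp only [hδA, ← op_mul, ← op_sub]
              congr 1; abel
            rw [this, sub_smul]
          obtain ⟨m, hm⟩ := T.sub_mem h2 h3
          refine ⟨m + 1, ?_⟩
          rw [pow_succ, mul_smul, key, hm]
      rintro t ⟨n, hn⟩
      exact inner n t hn
  -- T is finitely generated, so uniformly killed by a power of dA
  have : IsNoetherianRing S := hnoeth
  have hNB : IsNoetherian S B := inferInstance
  obtain ⟨s, hs⟩ := (IsNoetherian.noetherian T : T.FG)
  have hsT : ∀ g ∈ s, (g : B) ∈ T := by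
    intro g hg
    rw [← hs]
    exact Submodule.subset_span hg
  have huniform : ∀ u : Finset B, (∀ g ∈ u, (g : B) ∈ T) →
      ∃ N : ℕ, ∀ g ∈ u, (op dA) ^ N • g = 0 := by
    intro u
    induction u using Finset.induction with
    | empty => exact fun _ => ⟨0, by simp⟩
    | @insert g u' hgu ihu =>
      intro hmem
      obtain ⟨N, hN⟩ := ihu (fun x hx => hmem x (Finset.mem_insert_of_mem hx))
      obtain ⟨n, hn⟩ := hmem g (Finset.mem_insert_self g u')
      refine ⟨max n N, ?_⟩
      intro x hx
      rcases Finset.mem_insert.mp hx with rfl | hx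
      · exact mono x n _ (le_max_left _ _) hn
      · exact mono x N _ (le_max_right _ _) (hN x hx)
  obtain ⟨N, hN⟩ := huniform s hsT
  have hkill : ∀ t ∈ T, (op dA) ^ N • t = 0 := by
    intro t ht
    rw [← hs] at ht
    induction ht using Submodule.span_induction with
    | mem g hg => exact hN g hg
    | zero => simp
    | add x y _ _ hx hy => rw [smul_add, hx, hy, add_zero]
    | smul c x _ hx =>
      rw [show ((op dA) ^ N : Aᵐᵒᵖ) • c • x = c • ((op dA) ^ N • x)
        from (smul_comm c _ x).symm, hx, smul_zero]
  -- the annihilator two-sided ideal of T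
  have hAnt : Nontrivial A := inferInstance
  let I : TwoSidedIdeal A := TwoSidedIdeal.mk' {a : A | ∀ t ∈ T, op a • t = 0}
    (by intro t _; simp)
    (by intro x y hx hy t ht
        rw [op_add, add_smul, hx t ht, hy t ht, add_zero])
    (by intro x hx t ht
        rw [op_neg, neg_smul, hx t ht, neg_zero])
    (by intro x y hy t ht
        rw [op_mul, mul_smul]
        obtain ⟨K, hK⟩ := hA x
        exact hy _ (hTa K x hK t ht))
    (by intro x y hx t ht
        rw [op_mul, mul_smul, hx t ht, smul_zero])
  have hdANmem : dA ^ N ∈ I := by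
    rw [TwoSidedIdeal.mem_mk']
    intro t ht
    rw [op_pow]
    exact hkill t ht
  have hpow_ne : ∀ m : ℕ, dA ^ m ≠ 0 := by
    intro m
    induction m with
    | zero => simpa using one_ne_zero
    | succ k ihk =>
      intro h
      rw [pow_succ'] at h
      exact ihk (hreg₁ _ h)
  have hItop : I = ⊤ := by
    rcases (IsSimpleRing.simple (R := A)).eq_bot_or_eq_top I with h | h
    · exfalso
      apply hpow_ne N
      rw [h] at hdANmem
      simpa using hdANmem
    · exact h
  have hTbot : ∀ t ∈ T, t = 0 := by
    intro t ht
    have h1 : (1 : A) ∈ I := hItop ▸ TwoSidedIdeal.mem_top _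
    have := (TwoSidedIdeal.mem_mk' _ _ _ _ _ _ _).mp h1 t ht
    simpa using this
  have part1 : ∀ (b : B) (n : ℕ), (op dA ^ n) • b = 0 → b = 0 := by
    intro b n hb
    exact hTbot b ⟨n, hb⟩
  refine ⟨part1, ?_⟩
  -- base case for part 2
  have base : ∀ b : B, dS • b = 0 → b = 0 := by
    intro b hb
    obtain ⟨n, hn⟩ := hB b
    have key : ∀ m : ℕ, (fun b => dS • b - op dA • b)^[m] b = (op (-dA)) ^ m • b := by
      intro m
      induction m with
      | zero => simp
      | succ m ihm =>
        rw [Function.iterate_succ_apply', ihm]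
        show dS • ((op (-dA)) ^ m • b) - op dA • ((op (-dA)) ^ m • b) = _
        have h0 : dS • ((op (-dA)) ^ m • b) = 0 := by rw [smul_comm, hb, smul_zero]
        rw [h0, zero_sub, ← mul_smul, ← neg_smul, ← neg_mul, ← op_neg, ← pow_succ']
    rw [key n] at hn
    have e1 : (op (-dA) : Aᵐᵒᵖ) ^ n = (-1) ^ n * (op dA) ^ n := by rw [op_neg, neg_pow]
    have h5 := congrArg (fun x : B => ((-1 : Aᵐᵒᵖ) ^ n) • x) hn
    simp only [smul_zero] at h5
    rw [e1, ← mul_smul, ← mul_assoc, ← pow_add, Even.neg_one_pow ⟨n, rfl⟩, one_mul] at h5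
    exact part1 b n h5
  intro b n hb
  induction n generalizing b with
  | zero => simpa using hb
  | succ n ihn =>
    apply ihn
    apply base
    rw [← mul_smul, ← pow_succ']
    exact hb
end

section
/- Let R be a left and right noetherian ring, P a maximal two-sided ideal of R, and d ∈ R an element such that: (i) d acts locally ad-nilpotently on R; (ii) the image of d in R/P is a regular element of R/P (neither a left nor a right zero-divisor); and (iii) every element p ∈ P satisfies p·dⁿ = 0 for some n ≥ 1. Then P² = P, and there exists a two-sided ideal J of R with P ∩ J = 0 and P + J = R — so that R ≅ R/P × R/J as rings — such that every element of R/J is annihilated by some power of the image of d. Consequently, every right R-module M decomposes as M ≅ M/MP ⊕ M/MJ. -/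
/-!
The right annihilators of the powers `dⁿ` stabilize because `R` is noetherian. Left
multiplication by `d` is `ad d` plus right multiplication by `d`, two commuting operators, so
local ad-nilpotence turns right `d`-torsion into left `d`-torsion, whose annihilators stabilize
as well. Hence one power `dᴷ` kills `P` on both sides, and the ideal `J` generated by `dᴷ`
satisfies `P·J = J·P = 0`. Regularity of `d` modulo `P` gives `dᴷ ∉ P`, so `P + J = R` by
maximality, and writing `1 = e + f` with `e ∈ P`, `f ∈ J` splits `R`, and every right
`R`-module, along `P` and `J`.
-/

open MulOpposite

section Annihilators

variable {R : Type*} [Ring R]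

theorem eventually_forall_mul_pow_eq_zero [IsNoetherian R R] (a : R) :
    ∀ᶠ N in Filter.atTop, ∀ (n : ℕ) (x : R), x * a ^ n = 0 → x * a ^ N = 0 := by
  set f := RingEquiv.moduleEndSelf R (op a)
  have hf (n : ℕ) (x : R) : (f ^ n) x = x * a ^ n := by
    rw [← map_pow, RingEquiv.moduleEndSelf_apply, ← op_pow]; rfl
  filter_upwards [f.eventually_iSup_ker_pow_eq] with N hN n x hx
  rw [← hf, ← LinearMap.mem_ker, ← hN]
  exact Submodule.mem_iSup_of_mem n (by rwa [LinearMap.mem_ker, hf])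

theorem eventually_forall_pow_mul_eq_zero [IsNoetherian Rᵐᵒᵖ Rᵐᵒᵖ] (a : R) :
    ∀ᶠ N in Filter.atTop, ∀ (n : ℕ) (x : R), a ^ n * x = 0 → a ^ N * x = 0 := by
  filter_upwards [eventually_forall_mul_pow_eq_zero (op a)] with N hN n x hx
  simpa [← op_pow, ← op_mul] using hN n (op x) (by simpa [← op_pow, ← op_mul] using hx)

/-- Left multiplication by `d` is the sum of the commuting operators `ad d` and right
multiplication by `d`; a vector killed by powers of both is killed by a power of the sum. -/
theorem exists_pow_mul_eq_zero_of_exists_mul_pow_eq_zero {d x : R}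
    (hright : ∃ n, x * d ^ n = 0) (had : ∃ s, (fun a => d * a - a * d)^[s] x = 0) :
    ∃ m, d ^ m * x = 0 := by
  set L : Module.End ℤ R := LinearMap.mulLeft ℤ d
  set ρ : Module.End ℤ R := LinearMap.mulRight ℤ d
  have hcomm : Commute (L - ρ) ρ := (LinearMap.commute_mulLeft_right d d).sub_left (.refl ρ)
  have hx : x ∈ (L - ρ).maxGenEigenspace 0 ⊓ ρ.maxGenEigenspace 0 := by
    have hL : ⇑(L - ρ) = fun a => d * a - a * d := rfl
    simp only [Submodule.mem_inf, Module.End.mem_maxGenEigenspace, zero_smul, sub_zero,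
      Module.End.pow_apply, hL]
    refine ⟨had, ?_⟩
    simpa [← Module.End.pow_apply, ρ, LinearMap.pow_mulRight] using hright
  have hLx := Module.End.genEigenspace_inf_le_add _ _ 0 0 ⊤ ⊤ hcomm hx
  rw [sub_add_cancel, add_zero, top_add] at hLx
  obtain ⟨m, hm⟩ := (Module.End.mem_maxGenEigenspace _ _ _).mp hLx
  refine ⟨m, ?_⟩
  simpa [L, LinearMap.pow_mulLeft] using hm

end Annihilators

namespace TwoSidedIdeal

variable {R : Type*} [Ring R]

lemma mk'_eq_zero_iff {I : TwoSidedIdeal R} {x : R} : I.ringCon.mk' x = 0 ↔ x ∈ I := by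
  rw [← mem_ker, ker_ringCon_mk']

lemma pow_notMem_of_isRightRegular {I : TwoSidedIdeal R} (hI : I ≠ ⊤) {d : R}
    (hd : IsRightRegular (I.ringCon.mk' d)) (n : ℕ) : d ^ n ∉ I := by
  intro hn
  have h0 : IsRightRegular (0 : I.ringCon.Quotient) := by
    simpa [← mk'_eq_zero_iff.mpr hn] using hd.pow n
  refine hI ((one_mem_iff I).mp (mk'_eq_zero_iff.mp ?_))
  rw [map_one]
  exact (isRightRegular_zero_iff_subsingleton.mp h0).elim _ _

lemma mul_eq_zero_of_mem_span_singleton {I : TwoSidedIdeal R} {a : R}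
    (h : ∀ x ∈ I, x * a = 0) {x y : R} (hx : x ∈ I) (hy : y ∈ span {a}) : x * y = 0 := by
  induction hy using span_induction generalizing x with
  | mem y hy => rw [Set.mem_singleton_iff.mp hy]; exact h x hx
  | zero => exact mul_zero x
  | add y z _ _ hy hz => rw [mul_add, hy hx, hz hx, add_zero]
  | neg y _ hy => rw [mul_neg, hy hx, neg_zero]
  | left_absorb b y _ hy => rw [← mul_assoc]; exact hy (I.mul_mem_right x b hx)
  | right_absorb b y _ hy => rw [← mul_assoc, hy hx, zero_mul]

lemma mul_eq_zero_of_mem_span_singleton' {I : TwoSidedIdeal R} {a : R}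
    (h : ∀ x ∈ I, a * x = 0) {x y : R} (hy : y ∈ span {a}) (hx : x ∈ I) : y * x = 0 := by
  induction hy using span_induction generalizing x with
  | mem y hy => rw [Set.mem_singleton_iff.mp hy]; exact h x hx
  | zero => exact zero_mul x
  | add y z _ _ hy hz => rw [add_mul, hy hx, hz hx, add_zero]
  | neg y _ hy => rw [neg_mul, hy hx, neg_zero]
  | left_absorb b y _ hy => rw [mul_assoc, hy hx, mul_zero]
  | right_absorb b y _ hy => rw [mul_assoc]; exact hy (I.mul_mem_left b x hx)

section Orthogonal

variable {I J : TwoSidedIdeal R} (hsup : I ⊔ J = ⊤)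
include hsup

lemma exists_add_eq_one : ∃ e ∈ I, ∃ f ∈ J, e + f = 1 :=
  mem_sup.mp (hsup ▸ mem_top R)

lemma inf_eq_bot_of_mul_eq_zero (hIJ : ∀ x ∈ I, ∀ y ∈ J, x * y = 0)
    (hJI : ∀ y ∈ J, ∀ x ∈ I, y * x = 0) : I ⊓ J = ⊥ := by
  obtain ⟨e, he, f, hf, hef⟩ := exists_add_eq_one hsup
  refine eq_bot_iff.mpr fun x hx => (mem_bot R).mpr ?_
  obtain ⟨hxI, hxJ⟩ := (mem_inf R).mp hx
  calc x = x * e + x * f := by rw [← mul_add, hef, mul_one]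
    _ = 0 := by rw [hJI x hxJ e he, hIJ x hxI f hf, add_zero]

lemma mem_closure_mul_self_iff (hIJ : ∀ x ∈ I, ∀ y ∈ J, x * y = 0) (x : R) :
    x ∈ AddSubgroup.closure {y : R | ∃ p ∈ I, ∃ q ∈ I, y = p * q} ↔ x ∈ I := by
  obtain ⟨e, he, f, hf, hef⟩ := exists_add_eq_one hsup
  constructor
  · intro hx
    induction hx using AddSubgroup.closure_induction with
    | mem z hz => obtain ⟨p, -, q, hq, rfl⟩ := hz; exact I.mul_mem_left p q hq
    | zero => exact I.zero_mem
    | add z w _ _ hz hw => exact I.add_mem hz hw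
    | neg z _ hz => exact I.neg_mem hz
  · intro hx
    have hxe : x * e = x := by
      rw [← add_zero (x * e), ← hIJ x hx f hf, ← mul_add, hef, mul_one]
    exact AddSubgroup.subset_closure ⟨x, hx, e, he, hxe.symm⟩

lemma prod_mk'_bijective (hinf : I ⊓ J = ⊥) :
    Function.Bijective (I.ringCon.mk'.prod J.ringCon.mk') := by
  refine ⟨?_, ?_⟩
  · rw [injective_iff_map_eq_zero]
    intro x hx
    simp only [RingHom.prod_apply, Prod.mk_eq_zero, mk'_eq_zero_iff] at hx
    exact (mem_bot R).mp (hinf ▸ (mem_inf R).mpr hx)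
  · obtain ⟨e, he, f, hf, hef⟩ := exists_add_eq_one hsup
    rintro ⟨⟨a⟩, ⟨b⟩⟩
    have heI : I.ringCon.mk' e = 0 := mk'_eq_zero_iff.mpr he
    have hfJ : J.ringCon.mk' f = 0 := mk'_eq_zero_iff.mpr hf
    refine ⟨a * f + b * e, Prod.ext ?_ ?_⟩
    · have hfI : I.ringCon.mk' f = 1 := by
        rw [← map_one I.ringCon.mk', ← hef, map_add, heI, zero_add]
      change I.ringCon.mk' (a * f + b * e) = I.ringCon.mk' a
      rw [map_add, map_mul, map_mul, heI, hfI, mul_one, mul_zero, add_zero]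
    · have heJ : J.ringCon.mk' e = 1 := by
        rw [← map_one J.ringCon.mk', ← hef, map_add, hfJ, add_zero]
      change J.ringCon.mk' (a * f + b * e) = J.ringCon.mk' b
      rw [map_add, map_mul, map_mul, heJ, hfJ, mul_one, mul_zero, zero_add]

end Orthogonal

end TwoSidedIdeal

section RightModule

variable {R : Type*} [Ring R] (M : Type*) [AddCommGroup M] [Module Rᵐᵒᵖ M]

/-- The submodule `MI` of a right `R`-module `M`. -/
def TwoSidedIdeal.opSMulTop (I : TwoSidedIdeal R) : Submodule Rᵐᵒᵖ M :=
  Submodule.span Rᵐᵒᵖ {x : M | ∃ m : M, ∃ q ∈ I, x = MulOpposite.op q • m}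

variable {M}

lemma TwoSidedIdeal.op_smul_eq_zero_of_mem_opSMulTop {I J : TwoSidedIdeal R}
    (hIJ : ∀ x ∈ I, ∀ y ∈ J, x * y = 0) {z : M} (hz : z ∈ I.opSMulTop M) {y : R}
    (hy : y ∈ J) : MulOpposite.op y • z = 0 := by
  induction hz using Submodule.span_induction generalizing y with
  | mem z hz =>
    obtain ⟨m, q, hq, rfl⟩ := hz
    rw [smul_smul, ← op_mul, hIJ q hq y hy, op_zero, zero_smul]
  | zero => exact smul_zero _
  | add z w _ _ hz hw => rw [smul_add, hz hy, hw hy, add_zero]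
  | smul c z _ hz =>
    rw [smul_smul]
    exact hz (J.mul_mem_left c.unop y hy)

lemma TwoSidedIdeal.isCompl_opSMulTop {I J : TwoSidedIdeal R} (hsup : I ⊔ J = ⊤)
    (hIJ : ∀ x ∈ I, ∀ y ∈ J, x * y = 0) (hJI : ∀ y ∈ J, ∀ x ∈ I, y * x = 0) :
    IsCompl (I.opSMulTop M) (J.opSMulTop M) := by
  obtain ⟨e, he, f, hf, hef⟩ := exists_add_eq_one hsup
  have hdecomp (m : M) : m = MulOpposite.op e • m + MulOpposite.op f • m := by
    rw [← add_smul, ← op_add, hef, op_one, one_smul]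
  refine ⟨Submodule.disjoint_def.mpr fun z hzI hzJ => ?_, codisjoint_iff.mpr ?_⟩
  · rw [hdecomp z, op_smul_eq_zero_of_mem_opSMulTop hJI hzJ he,
      op_smul_eq_zero_of_mem_opSMulTop hIJ hzI hf, add_zero]
  · refine eq_top_iff.mpr fun m _ => hdecomp m ▸ Submodule.add_mem_sup ?_ ?_
    exacts [Submodule.subset_span ⟨m, e, he, rfl⟩, Submodule.subset_span ⟨m, f, hf, rfl⟩]

end RightModule

noncomputable def Submodule.equivQuotientProdOfIsCompl {S E : Type*} [Ring S] [AddCommGroup E]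
    [Module S E] {p q : Submodule S E} (h : IsCompl p q) : E ≃ₗ[S] (E ⧸ p) × (E ⧸ q) :=
  (Submodule.prodEquivOfIsCompl p q h).symm ≪≫ₗ LinearEquiv.prodComm S p q ≪≫ₗ
    (Submodule.quotientEquivOfIsCompl p q h).symm.prodCongr
      (Submodule.quotientEquivOfIsCompl q p h.symm).symm

theorem stmt_10_general {R : Type w} [Ring R]
    -- `R` is left and right noetherian
    (hnoeth : IsNoetherian R R) (hnoeth' : IsNoetherian Rᵐᵒᵖ Rᵐᵒᵖ)
    -- `P` is a maximal two-sided ideal of `R`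
    (P : TwoSidedIdeal R) (hP : IsCoatom P)
    (d : R)
    -- (i) `d` acts locally ad-nilpotently on `R`
    (had : ∀ a : R, ∃ n : ℕ, (fun a => d * a - a * d)^[n] a = 0)
    -- (ii) the image of `d` in `R/P` is regular
    (hreg₂ : ∀ y : P.ringCon.Quotient, y * P.ringCon.mk' d = 0 → y = 0)
    -- (iii) every `p ∈ P` satisfies `p·dⁿ = 0` for some `n ≥ 1`
    (htor : ∀ p ∈ P, ∃ n : ℕ, 1 ≤ n ∧ p * d ^ n = 0) :
    -- `P² = P`
    (∀ x : R, x ∈ AddSubgroup.closure {y : R | ∃ p ∈ P, ∃ q ∈ P, y = p * q} ↔ x ∈ P) ∧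
    -- the complementary ideal `J`
    ∃ J : TwoSidedIdeal R,
      P ⊓ J = ⊥ ∧ P ⊔ J = ⊤ ∧
      -- so that `R ≅ R/P × R/J` as rings
      Nonempty (R ≃+* (P.ringCon.Quotient × J.ringCon.Quotient)) ∧
      -- every element of `R/J` is annihilated by some power of the image of `d`
      (∀ y : J.ringCon.Quotient, ∃ n : ℕ, y * (J.ringCon.mk' d) ^ n = 0) ∧
      -- every right `R`-module decomposes as `M ≅ M/MP ⊕ M/MJ`
      (∀ (M : Type w) [AddCommGroup M] [Module Rᵐᵒᵖ M],
        Nonempty (M ≃ₗ[Rᵐᵒᵖ]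
          ((M ⧸ Submodule.span Rᵐᵒᵖ {x : M | ∃ m : M, ∃ p ∈ P, x = op p • m}) ×
           (M ⧸ Submodule.span Rᵐᵒᵖ {x : M | ∃ m : M, ∃ q ∈ J, x = op q • m})))) := by
  obtain ⟨K, hKright, hKleft⟩ :=
    ((eventually_forall_mul_pow_eq_zero d).and (eventually_forall_pow_mul_eq_zero d)).exists
  have hPd (p : R) (hp : p ∈ P) : p * d ^ K = 0 :=
    let ⟨n, _, hn⟩ := htor p hp
    hKright n p hn
  have hdP (p : R) (hp : p ∈ P) : d ^ K * p = 0 :=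
    let ⟨m, hm⟩ := exists_pow_mul_eq_zero_of_exists_mul_pow_eq_zero
      ((htor p hp).imp fun _ => And.right) (had p)
    hKleft m p hm
  set J := TwoSidedIdeal.span {d ^ K}
  have hdJ : d ^ K ∈ J := TwoSidedIdeal.subset_span rfl
  have hPJ (x : R) (hx : x ∈ P) (y : R) (hy : y ∈ J) : x * y = 0 :=
    TwoSidedIdeal.mul_eq_zero_of_mem_span_singleton hPd hx hy
  have hJP (y : R) (hy : y ∈ J) (x : R) (hx : x ∈ P) : y * x = 0 :=
    TwoSidedIdeal.mul_eq_zero_of_mem_span_singleton' hdP hy hx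
  have hdK : d ^ K ∉ P := P.pow_notMem_of_isRightRegular hP.ne_top
    (isRightRegular_iff_left_eq_zero_of_mul.mpr hreg₂) K
  have hsup : P ⊔ J = ⊤ :=
    codisjoint_iff.mp (hP.not_le_iff_codisjoint.mp fun hJ => hdK (hJ hdJ))
  have hinf : P ⊓ J = ⊥ := TwoSidedIdeal.inf_eq_bot_of_mul_eq_zero hsup hPJ hJP
  refine ⟨TwoSidedIdeal.mem_closure_mul_self_iff hsup hPJ, J, hinf, hsup,
    ⟨RingEquiv.ofBijective _ (TwoSidedIdeal.prod_mk'_bijective hsup hinf)⟩, fun y => ?_,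
    fun M _ _ => ⟨Submodule.equivQuotientProdOfIsCompl
      (TwoSidedIdeal.isCompl_opSMulTop hsup hPJ hJP)⟩⟩
  obtain ⟨b, rfl⟩ := J.ringCon.mk'_surjective y
  refine ⟨K, ?_⟩
  rw [← map_pow, ← map_mul, TwoSidedIdeal.mk'_eq_zero_iff]
  exact J.mul_mem_left b _ hdJ

theorem stmt_10 {R : Type w} [Ring R]
    -- `R` is left and right noetherian
    (hnoeth : IsNoetherian R R) (hnoeth' : IsNoetherian Rᵐᵒᵖ Rᵐᵒᵖ)
    -- `P` is a maximal two-sided ideal of `R`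
    (P : TwoSidedIdeal R) (hP : IsCoatom P)
    (d : R)
    -- (i) `d` acts locally ad-nilpotently on `R`
    (had : ∀ a : R, ∃ n : ℕ, (fun a => d * a - a * d)^[n] a = 0)
    -- (ii) the image of `d` in `R/P` is regular
    (hreg₁ : ∀ y : P.ringCon.Quotient, P.ringCon.mk' d * y = 0 → y = 0)
    (hreg₂ : ∀ y : P.ringCon.Quotient, y * P.ringCon.mk' d = 0 → y = 0)
    -- (iii) every `p ∈ P` satisfies `p·dⁿ = 0` for some `n ≥ 1`
    (htor : ∀ p ∈ P, ∃ n : ℕ, 1 ≤ n ∧ p * d ^ n = 0) :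
    -- `P² = P`
    (∀ x : R, x ∈ AddSubgroup.closure {y : R | ∃ p ∈ P, ∃ q ∈ P, y = p * q} ↔ x ∈ P) ∧
    -- the complementary ideal `J`
    ∃ J : TwoSidedIdeal R,
      P ⊓ J = ⊥ ∧ P ⊔ J = ⊤ ∧
      -- so that `R ≅ R/P × R/J` as rings
      Nonempty (R ≃+* (P.ringCon.Quotient × J.ringCon.Quotient)) ∧
      -- every element of `R/J` is annihilated by some power of the image of `d`
      (∀ y : J.ringCon.Quotient, ∃ n : ℕ, y * (J.ringCon.mk' d) ^ n = 0) ∧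
      -- every right `R`-module decomposes as `M ≅ M/MP ⊕ M/MJ`
      (∀ (M : Type w) [AddCommGroup M] [Module Rᵐᵒᵖ M],
        Nonempty (M ≃ₗ[Rᵐᵒᵖ]
          ((M ⧸ Submodule.span Rᵐᵒᵖ {x : M | ∃ m : M, ∃ p ∈ P, x = op p • m}) ×
           (M ⧸ Submodule.span Rᵐᵒᵖ {x : M | ∃ m : M, ∃ q ∈ J, x = op q • m})))) :=
  stmt_10_general hnoeth hnoeth' P hP d had hreg₂ htor
end

section
/- Let R be a ring, P a maximal two-sided ideal of R, and d ∈ R an element whose image in R/P is a regular element (neither a left nor a right zero-divisor). Let N be an (R,R)-bimodule that is finitely generated as a left R-module and in which every element n satisfies n·d^{j} = 0 for some j ≥ 1 (depending on n). Then there exists a single j ≥ 1 with N·d^{j} = 0. Moreover, if in addition N·P = 0, then N = 0. -/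
/-!
Right multiplication by `d` is a left `R`-linear endomorphism of `N`; it is locally nilpotent,
hence nilpotent because `N` is finitely generated. If moreover `N·P = 0`, the right annihilator
of `N` is a two-sided ideal containing `P` and `d^j`. Powers of `d` stay regular, hence nonzero,
in `R/P`, so `d^j ∉ P` and maximality of `P` forces the annihilator to contain `1`.
-/

open MulOpposite

theorem Module.End.isNilpotent_of_forall_exists_pow_apply_eq_zero {R M : Type*} [Semiring R]
    [AddCommMonoid M] [Module R M] [Module.Finite R M] {f : Module.End R M}
    (hf : ∀ m : M, ∃ n : ℕ, (f ^ n) m = 0) : IsNilpotent f := by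
  obtain ⟨S, hS⟩ := Module.Finite.fg_top (R := R) (M := M)
  choose n hn using hf
  refine ⟨S.sup n, LinearMap.ext fun m ↦ ?_⟩
  have hm : m ∈ Submodule.span R S := by simp [hS]
  induction hm using Submodule.span_induction with
  | mem x hx => exact Module.End.pow_map_zero_of_le (Finset.le_sup hx) (hn x)
  | zero => simp
  | add => simp_all
  | smul => simp_all

theorem TwoSidedIdeal.pow_notMem_of_isLeftRegular {R : Type*} [Ring R] {P : TwoSidedIdeal R}
    (hP : P ≠ ⊤) {d : R} (hd : IsLeftRegular (P.ringCon.mk' d)) (n : ℕ) : d ^ n ∉ P := by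
  have : Nontrivial P.ringCon.Quotient :=
    RingCon.nontrivial_quotient.2 fun h ↦ hP (ringCon_injective h)
  intro hdn
  apply (hd.pow n).ne_zero
  rw [← map_pow, ← map_zero P.ringCon.mk']
  exact P.ringCon.eq.2 hdn

theorem stmt_11_general {R : Type*} [Ring R]
    -- `P` is a maximal two-sided ideal of `R`
    (P : TwoSidedIdeal R) (hP : IsCoatom P)
    (d : R)
    -- the image of `d` in `R/P` is regular (neither a left nor a right zero-divisor)
    (hreg₁ : ∀ y : P.ringCon.Quotient, P.ringCon.mk' d * y = 0 → y = 0)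
    -- `N` is an `(R,R)`-bimodule, finitely generated as a left `R`-module
    (N : Type*) [AddCommGroup N] [Module R N] [Module Rᵐᵒᵖ N] [SMulCommClass R Rᵐᵒᵖ N]
    [Module.Finite R N]
    -- every `n ∈ N` satisfies `n·d^j = 0` for some `j ≥ 1`
    (htor : ∀ x : N, ∃ j : ℕ, 1 ≤ j ∧ (op d ^ j) • x = 0) :
    -- there is a single `j ≥ 1` with `N·d^j = 0`
    (∃ j : ℕ, 1 ≤ j ∧ ∀ x : N, (op d ^ j) • x = 0) ∧
    -- and if `N·P = 0` then `N = 0`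
    ((∀ (x : N) (p : R), p ∈ P → op p • x = 0) → ∀ x : N, x = 0) := by
  have := SMulCommClass.symm R Rᵐᵒᵖ N
  set φ := Module.toModuleEnd R (S := Rᵐᵒᵖ) N
  obtain ⟨n, hn⟩ : IsNilpotent (φ (op d)) :=
    Module.End.isNilpotent_of_forall_exists_pow_apply_eq_zero fun x ↦
      (htor x).imp fun j hj ↦ by rw [← map_pow]; exact hj.2
  have hdn : φ (op (d ^ (n + 1))) = 0 := by rw [op_pow, map_pow, pow_succ, hn, zero_mul]
  refine ⟨⟨n + 1, le_add_self, fun x ↦ LinearMap.congr_fun hdn x⟩, fun hPN x ↦ ?_⟩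
  let ann : TwoSidedIdeal R := (TwoSidedIdeal.ker φ).unop
  have mem_ann (r : R) : r ∈ ann ↔ φ (op r) = 0 := by
    rw [TwoSidedIdeal.mem_unop_iff, TwoSidedIdeal.mem_ker]
  have hPann : P ≤ ann := fun p hp ↦ (mem_ann p).2 (LinearMap.ext fun x ↦ hPN x p hp)
  have hdP : d ^ (n + 1) ∉ P := TwoSidedIdeal.pow_notMem_of_isLeftRegular hP.1
    (isLeftRegular_iff_right_eq_zero_of_mul.2 hreg₁) (n + 1)
  have hann : ann = ⊤ :=
    hP.2 ann (SetLike.lt_iff_le_and_exists.2 ⟨hPann, _, (mem_ann _).2 hdn, hdP⟩)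
  have h1 : φ 1 = 0 := by simpa using (mem_ann 1).1 (hann ▸ TwoSidedIdeal.mem_top R)
  simpa using LinearMap.congr_fun h1 x

theorem stmt_11 {R : Type*} [Ring R]
    -- `P` is a maximal two-sided ideal of `R`
    (P : TwoSidedIdeal R) (hP : IsCoatom P)
    (d : R)
    -- the image of `d` in `R/P` is regular (neither a left nor a right zero-divisor)
    (hreg₁ : ∀ y : P.ringCon.Quotient, P.ringCon.mk' d * y = 0 → y = 0)
    (hreg₂ : ∀ y : P.ringCon.Quotient, y * P.ringCon.mk' d = 0 → y = 0)
    -- `N` is an `(R,R)`-bimodule, finitely generated as a left `R`-module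
    (N : Type*) [AddCommGroup N] [Module R N] [Module Rᵐᵒᵖ N] [SMulCommClass R Rᵐᵒᵖ N]
    [Module.Finite R N]
    -- every `n ∈ N` satisfies `n·d^j = 0` for some `j ≥ 1`
    (htor : ∀ x : N, ∃ j : ℕ, 1 ≤ j ∧ (op d ^ j) • x = 0) :
    -- there is a single `j ≥ 1` with `N·d^j = 0`
    (∃ j : ℕ, 1 ≤ j ∧ ∀ x : N, (op d ^ j) • x = 0) ∧
    -- and if `N·P = 0` then `N = 0`
    ((∀ (x : N) (p : R), p ∈ P → op p • x = 0) → ∀ x : N, x = 0) :=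
  stmt_11_general P hP d hreg₁ N htor
end

section
/- Let b₂,…,b_n ∈ ℂ be nonzero scalars with b_i^ℓ ≠ b_j^ℓ for all 2 ≤ i < j ≤ n, let b = diag(0, b₂,…,b_n) ∈ Mat_n(ℂ), and let X_b = (b, b, …, b) ∈ V. Then the stabilizer {g ∈ G : g·X_b = X_b} consists exactly of the tuples (g^{(0)},…,g^{(ℓ−1)}) of invertible diagonal matrices whose (k,k)-entries for 2 ≤ k ≤ n are independent of the index: g^{(i)}_{kk} = g^{(j)}_{kk} for all i, j and all k ≥ 2; in particular this stabilizer is isomorphic as a group to (ℂ^×)^ℓ × (ℂ^×)^{n−1}. -/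
/-! Entrywise, `g · X_b = X_b` reads `g⁽ⁱ⁺¹⁾ₖₗ b_l = b_k g⁽ⁱ⁾ₖₗ`. Going once around the cycle
gives `g⁽ⁱ⁾ₖₗ (b_l^ℓ - b_k^ℓ) = 0`, so the off-diagonal entries vanish because the `b_k^ℓ` are
distinct (`b₁ = 0` included), while for `b_k ≠ 0` the entry `g⁽ⁱ⁾ₖₖ` does not change along the
cycle. The stabilizer is therefore the image of the injective homomorphism
`(t, s) ↦ (diag(tᵢ, s₂, …, s_n))ᵢ` from `(ℂ^×)^ℓ × (ℂ^×)^{n-1}`. -/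

noncomputable section

set_option maxHeartbeats 1000000

variable (n ℓ : ℕ) [NeZero ℓ]

/-- The representation space `V = Rep(Q_ℓ, nδ) = Mat_n(ℂ)^ℓ`. -/
abbrev Vq : Type := Fin ℓ → Matrix (Fin n) (Fin n) ℂ

/-- The group `G = GL_n(ℂ)^ℓ`. -/
abbrev Gq : Type := Fin ℓ → Matrix.GeneralLinearGroup (Fin n) ℂ

/-- The action `(g·X)⁽ⁱ⁾ = g⁽ⁱ⁺¹⁾ X⁽ⁱ⁾ (g⁽ⁱ⁾)⁻¹` (indices mod ℓ). -/
def qAct (g : Gq n ℓ) (M : Vq n ℓ) : Vq n ℓ :=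
  fun i => (g (i + 1) : Matrix (Fin n) (Fin n) ℂ) * M i * (((g i)⁻¹ : Matrix.GeneralLinearGroup (Fin n) ℂ) : Matrix (Fin n) (Fin n) ℂ)

lemma qAct_eq_iff (g : Gq n ℓ) (M : Vq n ℓ) :
    qAct n ℓ g M = M ↔ ∀ i, (g (i + 1) : Matrix (Fin n) (Fin n) ℂ) * M i
      = M i * (g i : Matrix (Fin n) (Fin n) ℂ) := by
  constructor
  · intro h i
    have hi := congrFun h i
    simp only [qAct] at hi
    calc (g (i + 1) : Matrix (Fin n) (Fin n) ℂ) * M i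
        = ((g (i + 1) : Matrix (Fin n) (Fin n) ℂ) * M i * ((g i)⁻¹ :
            Matrix.GeneralLinearGroup (Fin n) ℂ)) * (g i : Matrix (Fin n) (Fin n) ℂ) := by
          rw [Units.inv_mul_cancel_right]
      _ = M i * (g i : Matrix (Fin n) (Fin n) ℂ) := by rw [hi]
  · intro h
    funext i
    simp only [qAct]
    rw [h i, Units.mul_inv_cancel_right]

/-- The stabilizer of `M ∈ V` in `G`, as a subgroup. -/
def qStab (M : Vq n ℓ) : Subgroup (Gq n ℓ) where
  carrier := {g | qAct n ℓ g M = M}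
  one_mem' := by
    simp only [Set.mem_setOf_eq, qAct_eq_iff]
    intro i
    simp
  mul_mem' := by
    intro g h hg hh
    simp only [Set.mem_setOf_eq, qAct_eq_iff] at *
    intro i
    have : ((g * h) (i + 1) : Matrix (Fin n) (Fin n) ℂ) = (g (i+1) : Matrix (Fin n) (Fin n) ℂ) * (h (i+1) : Matrix (Fin n) (Fin n) ℂ) := rfl
    rw [this, mul_assoc, hh i, ← mul_assoc, hg i, mul_assoc]
    rfl
  inv_mem' := by
    intro g hg
    simp only [Set.mem_setOf_eq, qAct_eq_iff] at *
    intro i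
    have hgi := hg i
    calc (g⁻¹ (i + 1) : Matrix (Fin n) (Fin n) ℂ) * M i
        = (g⁻¹ (i + 1) : Matrix (Fin n) (Fin n) ℂ) * M i * (g i : Matrix (Fin n) (Fin n) ℂ) * ((g i)⁻¹ : Matrix.GeneralLinearGroup (Fin n) ℂ) := by
          rw [Units.mul_inv_cancel_right]
      _ = (g⁻¹ (i + 1) : Matrix (Fin n) (Fin n) ℂ) * ((g (i+1) : Matrix (Fin n) (Fin n) ℂ) * M i) * ((g i)⁻¹ : Matrix.GeneralLinearGroup (Fin n) ℂ) := by
          rw [mul_assoc ((g⁻¹ (i + 1) : Matrix (Fin n) (Fin n) ℂ)), hgi]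
      _ = M i * (g⁻¹ i : Matrix (Fin n) (Fin n) ℂ) := by
          have h1 : (g⁻¹ (i + 1) : Matrix (Fin n) (Fin n) ℂ) * (g (i+1) : Matrix (Fin n) (Fin n) ℂ) = 1 := by
            rw [← Units.val_mul]
            simp
          rw [← mul_assoc, h1, one_mul]
          rfl

open Matrix

section Cyclic

open Fin.NatCast

variable {M : Type*} {ℓ : ℕ} [NeZero ℓ] {f : Fin ℓ → M} {c d : M}

theorem Fin.apply_add_natCast_mul_pow_eq [CommMonoid M] (h : ∀ i, f (i + 1) * d = c * f i)
    (i : Fin ℓ) (m : ℕ) : f (i + m) * d ^ m = c ^ m * f i := by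
  induction m with
  | zero => simp
  | succ m ih =>
    calc f (i + (m + 1 : ℕ)) * d ^ (m + 1)
        = f (i + m + 1) * d * d ^ m := by rw [Nat.cast_succ, ← add_assoc, pow_succ', mul_assoc]
      _ = c ^ (m + 1) * f i := by rw [h, mul_assoc, ih, pow_succ', mul_assoc]

theorem Fin.apply_eq_zero_of_apply_add_one_mul_eq [CommMonoidWithZero M] [IsCancelMulZero M]
    (h : ∀ i, f (i + 1) * d = c * f i) (hcd : c ^ ℓ ≠ d ^ ℓ) (i : Fin ℓ) : f i = 0 := by
  have hcycle := Fin.apply_add_natCast_mul_pow_eq h i ℓ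
  rw [Fin.natCast_self, add_zero, mul_comm] at hcycle
  by_contra hfi
  exact hcd (mul_right_cancel₀ hfi hcycle).symm

theorem Fin.apply_eq_apply_of_apply_add_one_mul_eq [CommMonoidWithZero M] [IsCancelMulZero M]
    (h : ∀ i, f (i + 1) * c = c * f i) (hc : c ≠ 0) (i j : Fin ℓ) : f i = f j := by
  have hstep := Fin.apply_add_natCast_mul_pow_eq h i (j - i).val
  rw [Fin.cast_val_eq_self, add_sub_cancel, mul_comm] at hstep
  exact (mul_left_cancel₀ (pow_ne_zero _ hc) hstep).symm

end Cyclic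

theorem injective_pow_apply {K ι : Type*} [MonoidWithZero K] [NoZeroDivisors K]
    {ℓ : ℕ} (hℓ : ℓ ≠ 0) {b : ι → K} (i₀ : ι) (hb0 : b i₀ = 0) (hbne : ∀ i, i ≠ i₀ → b i ≠ 0)
    (hbdist : ∀ i j, i ≠ i₀ → j ≠ i₀ → i ≠ j → b i ^ ℓ ≠ b j ^ ℓ) :
    Function.Injective fun k => b k ^ ℓ := by
  intro i j hij
  by_contra hne
  have hpow (k) (hk : k ≠ i₀) : b k ^ ℓ ≠ 0 := pow_ne_zero ℓ (hbne k hk)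
  obtain rfl | hi := eq_or_ne i i₀
  · exact hpow j (Ne.symm hne) (by simpa [hb0, zero_pow hℓ] using hij.symm)
  obtain rfl | hj := eq_or_ne j i₀
  · exact hpow i hi (by simpa [hb0, zero_pow hℓ] using hij)
  exact hbdist i j hi hj hne hij

namespace Matrix

variable {ι R : Type*} [Fintype ι] [DecidableEq ι] [CommRing R]

theorem mul_diagonal_eq_diagonal_mul_iff [IsDomain R] {ℓ : ℕ} [NeZero ℓ] {b : ι → R}
    (hb : Function.Injective fun k => b k ^ ℓ) (A : Fin ℓ → Matrix ι ι R) :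
    (∀ i, A (i + 1) * diagonal b = diagonal b * A i) ↔
      (∀ i, (A i).IsDiag) ∧ ∀ i j k, b k ≠ 0 → A i k k = A j k k := by
  have hentry : (∀ i, A (i + 1) * diagonal b = diagonal b * A i) ↔
      ∀ k l i, A (i + 1) k l * b l = b k * A i k l := by
    simp only [← Matrix.ext_iff, mul_diagonal, diagonal_mul]
    exact ⟨fun h k l i => h i k l, fun h i k l => h k l i⟩
  rw [hentry]
  constructor
  · intro h
    exact ⟨fun i k l hkl =>
        Fin.apply_eq_zero_of_apply_add_one_mul_eq (f := (A · k l)) (h k l) (hb.ne hkl) i,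
      fun i j k hk => Fin.apply_eq_apply_of_apply_add_one_mul_eq (f := (A · k k)) (h k k) hk i j⟩
  · rintro ⟨hdiag, hconst⟩ k l i
    by_cases hkl : k = l
    · subst hkl
      by_cases hk : b k = 0
      · simp [hk]
      · rw [hconst (i + 1) i k hk, mul_comm]
    · rw [hdiag (i + 1) hkl, hdiag i hkl, zero_mul, mul_zero]

def diagonalUnits : (ι → Rˣ) →* GeneralLinearGroup ι R :=
  (Units.map (diagonalRingHom ι R).toMonoidHom).comp MulEquiv.piUnits.symm.toMonoidHom

@[simp]
theorem coe_diagonalUnits (u : ι → Rˣ) :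
    (diagonalUnits u : Matrix ι ι R) = diagonal fun k => (u k : R) := rfl

theorem diagonalUnits_injective : Function.Injective (diagonalUnits (ι := ι) (R := R)) := by
  intro u v huv
  have := diagonal_injective (congrArg Units.val huv)
  exact funext fun k => Units.ext (congrFun this k)

theorem exists_diagonalUnits_eq {A : GeneralLinearGroup ι R} (hA : (A : Matrix ι ι R).IsDiag) :
    ∃ u, diagonalUnits u = A := by
  have hunit : IsUnit (diag (A : Matrix ι ι R)) := by
    rw [← isUnit_diagonal, hA.diagonal_diag]
    exact A.isUnit
  exact ⟨fun k => (Pi.isUnit_iff.mp hunit k).unit, Units.ext hA.diagonal_diag⟩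

variable {m ℓ : ℕ}

variable (R m ℓ) in
def consDiagonalHom :
    (Fin ℓ → Rˣ) × (Fin m → Rˣ) →* (Fin ℓ → GeneralLinearGroup (Fin (m + 1)) R) where
  toFun p i := diagonalUnits (Fin.cons (p.1 i) p.2)
  map_one' := funext fun _ => by
    rw [Pi.one_apply, ← map_one diagonalUnits]
    exact congrArg _ (funext (Fin.cases rfl fun _ => rfl))
  map_mul' _ _ := funext fun _ => by
    rw [Pi.mul_apply, ← map_mul]
    exact congrArg _ (funext (Fin.cases rfl fun _ => rfl))

theorem consDiagonalHom_apply (p : (Fin ℓ → Rˣ) × (Fin m → Rˣ)) (i : Fin ℓ) :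
    consDiagonalHom R m ℓ p i = diagonalUnits (Fin.cons (p.1 i) p.2) := rfl

theorem consDiagonalHom_injective [NeZero ℓ] : Function.Injective (consDiagonalHom R m ℓ) := by
  intro p q hpq
  have hcons i := Fin.cons_inj.mp (diagonalUnits_injective (congrFun hpq i))
  exact Prod.ext (funext fun i => (hcons i).1) (hcons 0).2

theorem mem_range_consDiagonalHom_iff [NeZero ℓ]
    (g : Fin ℓ → GeneralLinearGroup (Fin (m + 1)) R) :
    g ∈ (consDiagonalHom R m ℓ).range ↔
      (∀ i, (g i : Matrix (Fin (m + 1)) (Fin (m + 1)) R).IsDiag) ∧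
        ∀ i j k, k ≠ 0 → (g i : Matrix (Fin (m + 1)) _ R) k k = (g j : Matrix _ _ R) k k := by
  constructor
  · rintro ⟨p, rfl⟩
    refine ⟨fun i => ?_, fun i j k hk => ?_⟩
    · simp [consDiagonalHom_apply, isDiag_diagonal]
    · obtain ⟨k, rfl⟩ := Fin.exists_succ_eq.mpr hk
      simp [consDiagonalHom_apply]
  · rintro ⟨hdiag, hconst⟩
    choose u hu using fun i => exists_diagonalUnits_eq (hdiag i)
    refine ⟨(fun i => u i 0, Fin.tail (u 0)), funext fun i => ?_⟩
    rw [consDiagonalHom_apply, ← hu i]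
    congr 1
    refine funext fun k => Fin.cases rfl (fun k => Units.ext ?_) k
    simpa [Fin.tail, ← hu] using hconst 0 i k.succ (Fin.succ_ne_zero k)

end Matrix

theorem stmt_14_general (n ℓ : ℕ) [NeZero ℓ] [NeZero n] (b : Fin n → ℂ)
    -- `b = diag(0, b₂, …, b_n)` with all `b_i ≠ 0` and `b_i^ℓ ≠ b_j^ℓ` for `i ≠ j`
    (hb0 : b 0 = 0)
    (hbne : ∀ i : Fin n, i ≠ 0 → b i ≠ 0)
    (hbdist : ∀ i j : Fin n, i ≠ 0 → j ≠ 0 → i ≠ j → b i ^ ℓ ≠ b j ^ ℓ) :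
    -- the stabilizer of `X_b = (b, b, …, b)` consists exactly of the tuples of invertible
    -- diagonal matrices whose `(k,k)`-entries, for `k ≠ 0`, are independent of the index
    (∀ g : Gq n ℓ, g ∈ qStab n ℓ (fun _ => Matrix.diagonal b) ↔
      ((∀ (i : Fin ℓ) (k l : Fin n), k ≠ l → (g i : Matrix (Fin n) (Fin n) ℂ) k l = 0) ∧
       (∀ (i j : Fin ℓ) (k : Fin n), k ≠ 0 →
         (g i : Matrix (Fin n) (Fin n) ℂ) k k = (g j : Matrix (Fin n) (Fin n) ℂ) k k))) ∧
    -- in particular, the stabilizer is isomorphic as a group to `(ℂ^×)^ℓ × (ℂ^×)^{n-1}`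
    Nonempty (qStab n ℓ (fun _ => Matrix.diagonal b) ≃* ((Fin ℓ → ℂˣ) × (Fin (n - 1) → ℂˣ))) := by
  have hb : Function.Injective fun k => b k ^ ℓ :=
    injective_pow_apply (NeZero.ne ℓ) 0 hb0 hbne hbdist
  have hb_ne_zero (k : Fin n) : b k ≠ 0 ↔ k ≠ 0 :=
    ⟨fun hk h => hk (h ▸ hb0), hbne k⟩
  have hmem (g : Gq n ℓ) : g ∈ qStab n ℓ (fun _ => diagonal b) ↔
      (∀ i, (g i : Matrix (Fin n) (Fin n) ℂ).IsDiag) ∧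
        ∀ i j k, k ≠ 0 → (g i : Matrix (Fin n) (Fin n) ℂ) k k = (g j : Matrix _ _ ℂ) k k := by
    refine (qAct_eq_iff n ℓ g _).trans ?_
    simpa only [hb_ne_zero] using mul_diagonal_eq_diagonal_mul_iff hb fun i => (g i : Matrix _ _ ℂ)
  refine ⟨hmem, ?_⟩
  obtain ⟨m, rfl⟩ := Nat.exists_eq_succ_of_ne_zero (NeZero.ne n)
  have hrange : qStab (m + 1) ℓ (fun _ => diagonal b) = (consDiagonalHom ℂ m ℓ).range :=
    Subgroup.ext fun g => (hmem g).trans (mem_range_consDiagonalHom_iff g).symm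
  exact ⟨(MulEquiv.subgroupCongr hrange).trans
    (MonoidHom.ofInjective consDiagonalHom_injective).symm⟩

theorem stmt_14 (n ℓ : ℕ) [NeZero ℓ] [NeZero n] (hn : 2 ≤ n) (b : Fin n → ℂ)
    -- `b = diag(0, b₂, …, b_n)` with all `b_i ≠ 0` and `b_i^ℓ ≠ b_j^ℓ` for `i ≠ j`
    (hb0 : b 0 = 0)
    (hbne : ∀ i : Fin n, i ≠ 0 → b i ≠ 0)
    (hbdist : ∀ i j : Fin n, i ≠ 0 → j ≠ 0 → i ≠ j → b i ^ ℓ ≠ b j ^ ℓ) :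
    -- the stabilizer of `X_b = (b, b, …, b)` consists exactly of the tuples of invertible
    -- diagonal matrices whose `(k,k)`-entries, for `k ≠ 0`, are independent of the index
    (∀ g : Gq n ℓ, g ∈ qStab n ℓ (fun _ => Matrix.diagonal b) ↔
      ((∀ (i : Fin ℓ) (k l : Fin n), k ≠ l → (g i : Matrix (Fin n) (Fin n) ℂ) k l = 0) ∧
       (∀ (i j : Fin ℓ) (k : Fin n), k ≠ 0 →
         (g i : Matrix (Fin n) (Fin n) ℂ) k k = (g j : Matrix (Fin n) (Fin n) ℂ) k k))) ∧
    -- in particular, the stabilizer is isomorphic as a group to `(ℂ^×)^ℓ × (ℂ^×)^{n-1}`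
    Nonempty (qStab n ℓ (fun _ => Matrix.diagonal b) ≃* ((Fin ℓ → ℂˣ) × (Fin (n - 1) → ℂˣ))) :=
  stmt_14_general n ℓ b hb0 hbne hbdist

end
end

section
/- Let b₂,…,b_n ∈ ℂ be nonzero scalars with b_i^ℓ ≠ b_j^ℓ for all 2 ≤ i < j ≤ n, let b = diag(b₂, b₂, b₃,…,b_n) ∈ Mat_n(ℂ) (so that b₂ occurs with multiplicity two), and let X_b = (b, b, …, b) ∈ V. Then the stabilizer {g ∈ G : g·X_b = X_b} consists exactly of the constant tuples (g, g, …, g) with g ∈ GL_n(ℂ) commuting with b; such g are precisely the block-diagonal matrices diag(A, t₃,…,t_n) with A ∈ GL₂(ℂ) and t₃,…,t_n ∈ ℂ^×, so the stabilizer is isomorphic as a group to GL₂(ℂ) × (ℂ^×)^{n−2}. -/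
/-! Writing `D = diag(b)`, the equation `g·X_b = X_b` says `g⁽ⁱ⁺¹⁾ D = D g⁽ⁱ⁾` for all `i`.
Going once around the cycle, `g⁽⁰⁾` commutes with `D^ℓ = diag(b_i^ℓ)`. A matrix commutes with a
diagonal matrix exactly when it vanishes off the level sets of the diagonal, and the hypotheses
say that `b` and `b^ℓ` have the same level sets `{1, 2}, {3}, …, {n}`. Hence `g⁽⁰⁾` commutes
with `D`, which turns the cyclic relation into `g⁽ⁱ⁺¹⁾ = g⁽ⁱ⁾`, and `g⁽⁰⁾` is block diagonal.
The block-diagonal embedding `GL₂ × (ℂ^×)^{n-2} → GL_n` is injective and its image consists of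
the invertible block-diagonal matrices, whose inverses are block diagonal too. -/

noncomputable section

set_option maxHeartbeats 1000000

variable (n ℓ : ℕ) [NeZero ℓ]

open Matrix

namespace Matrix

variable {ι R : Type*} [Fintype ι] [DecidableEq ι] [CommRing R] [NoZeroDivisors R]
  {M : Matrix ι ι R}

theorem commute_diagonal_iff {d : ι → R} :
    Commute M (diagonal d) ↔ ∀ k l, d k ≠ d l → M k l = 0 := by
  simp only [commute_iff_eq, ← Matrix.ext_iff, mul_diagonal, diagonal_mul]
  refine forall₂_congr fun k l => ⟨fun h hne => ?_, fun h => ?_⟩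
  · have : (d l - d k) * M k l = 0 := by linear_combination h
    exact (mul_eq_zero.1 this).resolve_left (sub_ne_zero.2 hne.symm)
  · by_cases hd : d k = d l
    · rw [hd, mul_comm]
    · rw [h hd, zero_mul, mul_zero]

theorem commute_diagonal_of_commute_diagonal {d e : ι → R} (hde : ∀ k l, e k = e l → d k = d l)
    (h : Commute M (diagonal e)) : Commute M (diagonal d) :=
  commute_diagonal_iff.2 fun k l hne => commute_diagonal_iff.1 h k l (mt (hde k l) hne)

end Matrix

section CyclicIntertwining

open Fin.NatCast

variable {G : Type*} [Monoid G] {ℓ : ℕ} [NeZero ℓ] {g : Fin ℓ → G} {u : G}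

theorem Fin.mul_pow_eq_pow_mul_of_forall_add_one (h : ∀ i, g (i + 1) * u = u * g i) (k : ℕ)
    (i : Fin ℓ) : g (i + k) * u ^ k = u ^ k * g i := by
  induction k generalizing i with
  | zero => simp
  | succ k ih =>
    rw [Nat.cast_succ, ← add_assoc, pow_succ', ← mul_assoc, h, mul_assoc, ih, ← mul_assoc,
      ← pow_succ']

theorem Fin.commute_pow_card_of_forall_add_one (h : ∀ i, g (i + 1) * u = u * g i) (i : Fin ℓ) :
    Commute (g i) (u ^ ℓ) := by
  show g i * u ^ ℓ = u ^ ℓ * g i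
  simpa using Fin.mul_pow_eq_pow_mul_of_forall_add_one h ℓ i

theorem Fin.apply_eq_apply_zero_of_forall_add_one (hu : IsUnit u)
    (h : ∀ i, g (i + 1) * u = u * g i) (hc : Commute (g 0) u) (i : Fin ℓ) : g i = g 0 := by
  suffices ∀ k : ℕ, g k = g 0 by simpa using this i
  intro k
  induction k with
  | zero => simp
  | succ k ih => rw [← hu.mul_left_inj, Nat.cast_succ, h, ih, hc.eq]

theorem Fin.forall_add_one_mul_eq_mul_iff (hu : IsUnit u)
    (hpow : ∀ x, Commute x (u ^ ℓ) → Commute x u) :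
    (∀ i, g (i + 1) * u = u * g i) ↔ (∀ i, g i = g 0) ∧ Commute (g 0) u := by
  refine ⟨fun h => ?_, fun ⟨hg, hc⟩ i => by rw [hg (i + 1), hg i, hc.eq]⟩
  have hc := hpow _ (Fin.commute_pow_card_of_forall_add_one h 0)
  exact ⟨Fin.apply_eq_apply_zero_of_forall_add_one hu h hc, hc⟩

end CyclicIntertwining

theorem Units.mem_range_map_iff {M N : Type*} [Monoid M] [Monoid N] {f : M →* N}
    (hf : Function.Injective f) (u : Nˣ) :
    u ∈ (Units.map f).range ↔ (u : N) ∈ Set.range f ∧ ((u⁻¹ : Nˣ) : N) ∈ Set.range f := by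
  constructor
  · rintro ⟨v, rfl⟩
    exact ⟨⟨v, rfl⟩, ⟨↑v⁻¹, rfl⟩⟩
  · rintro ⟨⟨x, hx⟩, ⟨y, hy⟩⟩
    have hxy : x * y = 1 := hf (by simp [hx, hy])
    have hyx : y * x = 1 := hf (by simp [hx, hy])
    exact ⟨⟨x, y, hxy, hyx⟩, Units.ext hx⟩

namespace Matrix

variable {R : Type*} {m n : ℕ}

def finSplitEquiv (hm : m ≤ n) : Fin m ⊕ Fin (n - m) ≃ Fin n :=
  finSumFinEquiv.trans (finCongr (Nat.add_sub_cancel' hm))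

@[simp]
theorem finSplitEquiv_inl_val (hm : m ≤ n) (i : Fin m) : (finSplitEquiv hm (.inl i) : ℕ) = i :=
  rfl

@[simp]
theorem finSplitEquiv_inr_val (hm : m ≤ n) (j : Fin (n - m)) :
    (finSplitEquiv hm (.inr j) : ℕ) = m + j :=
  rfl

def IsCornerBlockDiagonal (m : ℕ) [Zero R] (M : Matrix (Fin n) (Fin n) R) : Prop :=
  ∀ k l : Fin n, k ≠ l → ¬((k : ℕ) < m ∧ (l : ℕ) < m) → M k l = 0

theorem commute_diagonal_iff_isCornerBlockDiagonal {R : Type*} [CommRing R] [NoZeroDivisors R]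
    {d : Fin n → R}
    (hd : ∀ k l, d k = d l ↔ k = l ∨ ((k : ℕ) < m ∧ (l : ℕ) < m))
    (M : Matrix (Fin n) (Fin n) R) :
    Commute M (diagonal d) ↔ IsCornerBlockDiagonal m M := by
  simp only [commute_diagonal_iff, ne_eq, hd, not_or, and_imp, IsCornerBlockDiagonal]

variable [Semiring R]

/-- `(A, t) ↦ diag(A, t₁, …, t_{n-m})`. -/
def cornerBlockDiagonal (hm : m ≤ n) :
    Matrix (Fin m) (Fin m) R × (Fin (n - m) → R) →* Matrix (Fin n) (Fin n) R where
  toFun p := reindex (finSplitEquiv hm) (finSplitEquiv hm) (fromBlocks p.1 0 0 (diagonal p.2))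
  map_one' := by simp [fromBlocks_one]
  map_mul' p q := by simp [submatrix_mul_equiv, fromBlocks_multiply]; rfl

theorem cornerBlockDiagonal_injective (hm : m ≤ n) :
    Function.Injective (cornerBlockDiagonal (R := R) hm) := by
  intro p q h
  obtain ⟨h₁, -, -, h₂⟩ := fromBlocks_inj.1 ((reindex _ _).injective h)
  exact Prod.ext h₁ (diagonal_injective h₂)

theorem mem_range_cornerBlockDiagonal_iff (hm : m ≤ n) (M : Matrix (Fin n) (Fin n) R) :
    M ∈ Set.range (cornerBlockDiagonal hm) ↔ IsCornerBlockDiagonal m M := by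
  constructor
  · rintro ⟨p, rfl⟩ k l hkl hkl₂
    obtain ⟨k, rfl⟩ := (finSplitEquiv hm).surjective k
    obtain ⟨l, rfl⟩ := (finSplitEquiv hm).surjective l
    rcases k with i | j <;> rcases l with i' | j'
    · simp at hkl₂
    all_goals simp_all [cornerBlockDiagonal]
  · intro hM
    refine ⟨(of fun i i' => M (finSplitEquiv hm (.inl i)) (finSplitEquiv hm (.inl i')),
      fun j => M (finSplitEquiv hm (.inr j)) (finSplitEquiv hm (.inr j))), ?_⟩
    ext k l
    obtain ⟨k, rfl⟩ := (finSplitEquiv hm).surjective k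
    obtain ⟨l, rfl⟩ := (finSplitEquiv hm).surjective l
    rcases k with i | j <;> rcases l with i' | j'
    · simp [cornerBlockDiagonal]
    all_goals simp only [cornerBlockDiagonal, MonoidHom.coe_mk, OneHom.coe_mk, reindex_apply,
      submatrix_apply, Equiv.symm_apply_apply, fromBlocks_apply₁₂, fromBlocks_apply₂₁,
      fromBlocks_apply₂₂, zero_apply]
    · exact (hM _ _ (by simp) (by simp)).symm
    · exact (hM _ _ (by simp) (by simp)).symm
    · rcases eq_or_ne j j' with rfl | hjj
      · simp
      · rw [diagonal_apply_ne _ hjj, hM _ _ (by simpa using hjj) (by simp)]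

end Matrix

section RepeatedFirstEntry

variable {M : Type*} {n : ℕ} [NeZero n] {b : Fin n → M}

theorem apply_eq_apply_of_val_lt_two (hn : 2 ≤ n) (hb01 : b 0 = b 1) {k l : Fin n}
    (hk : (k : ℕ) < 2) (hl : (l : ℕ) < 2) : b k = b l := by
  have h1 : ((1 : Fin n) : ℕ) = 1 := by rw [Fin.val_one', Nat.mod_eq_of_lt (by omega)]
  have hb0 : ∀ k : Fin n, (k : ℕ) < 2 → b k = b 0 := by
    intro k hk
    obtain rfl | rfl : k = 0 ∨ k = 1 := by simp only [Fin.ext_iff, Fin.val_zero, h1]; omega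
    exacts [rfl, hb01.symm]
  rw [hb0 k hk, hb0 l hl]

variable [Monoid M]

theorem apply_pow_eq_apply_pow_iff_of_first_two_eq (hn : 2 ≤ n) (hb01 : b 0 = b 1) {ℓ : ℕ}
    (hbdist : ∀ i j : Fin n, i ≠ 0 → j ≠ 0 → i ≠ j → b i ^ ℓ ≠ b j ^ ℓ) (k l : Fin n) :
    b k ^ ℓ = b l ^ ℓ ↔ k = l ∨ ((k : ℕ) < 2 ∧ (l : ℕ) < 2) := by
  -- `r` merges the index `0` into `1`: `b ∘ r = b`, `r` avoids `0`, and its fibres are the blocks.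
  let r : Fin n → Fin n := fun k => if (k : ℕ) < 2 then 1 else k
  have h1 : ((1 : Fin n) : ℕ) = 1 := by rw [Fin.val_one', Nat.mod_eq_of_lt (by omega)]
  have hr0 : ∀ k, r k ≠ 0 := by
    intro k
    simp only [r, ne_eq, Fin.ext_iff, Fin.val_zero]
    split_ifs <;> omega
  have hbr : ∀ k, b (r k) = b k := by
    intro k
    simp only [r]
    split_ifs with hk
    exacts [apply_eq_apply_of_val_lt_two hn hb01 (by omega) hk, rfl]
  have hrr : r k = r l ↔ k = l ∨ ((k : ℕ) < 2 ∧ (l : ℕ) < 2) := by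
    simp only [r, Fin.ext_iff]
    split_ifs <;> omega
  rw [← hbr k, ← hbr l, ← hrr]
  exact ⟨not_imp_not.1 (hbdist _ _ (hr0 k) (hr0 l)), fun h => by rw [h]⟩

theorem apply_eq_apply_iff_of_first_two_eq (hn : 2 ≤ n) (hb01 : b 0 = b 1) {ℓ : ℕ}
    (hbdist : ∀ i j : Fin n, i ≠ 0 → j ≠ 0 → i ≠ j → b i ^ ℓ ≠ b j ^ ℓ) (k l : Fin n) :
    b k = b l ↔ k = l ∨ ((k : ℕ) < 2 ∧ (l : ℕ) < 2) := by
  refine ⟨fun h => (apply_pow_eq_apply_pow_iff_of_first_two_eq hn hb01 hbdist k l).1 (by rw [h]),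
    ?_⟩
  rintro (rfl | ⟨hk, hl⟩)
  exacts [rfl, apply_eq_apply_of_val_lt_two hn hb01 hk hl]

end RepeatedFirstEntry

theorem mem_qStab_const_iff {n ℓ : ℕ} [NeZero ℓ] {D : Matrix (Fin n) (Fin n) ℂ} (hD : IsUnit D)
    (hpow : ∀ x, Commute x (D ^ ℓ) → Commute x D) (g : Gq n ℓ) :
    g ∈ qStab n ℓ (fun _ => D) ↔
      (∀ i, g i = g 0) ∧ Commute (g 0 : Matrix (Fin n) (Fin n) ℂ) D := by
  change qAct n ℓ g _ = _ ↔ _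
  rw [qAct_eq_iff,
    Fin.forall_add_one_mul_eq_mul_iff (g := fun i => (g i : Matrix (Fin n) (Fin n) ℂ)) hD hpow]
  simp only [Units.val_inj]

theorem mem_qStab_diagonal_iff {n ℓ : ℕ} [NeZero ℓ] [NeZero n] (hn : 2 ≤ n) {b : Fin n → ℂ}
    (hb01 : b 0 = b 1) (hbne : ∀ i, b i ≠ 0)
    (hbdist : ∀ i j : Fin n, i ≠ 0 → j ≠ 0 → i ≠ j → b i ^ ℓ ≠ b j ^ ℓ) (g : Gq n ℓ) :
    g ∈ qStab n ℓ (fun _ => diagonal b) ↔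
      (∀ i, g i = g 0) ∧ Commute (g 0 : Matrix (Fin n) (Fin n) ℂ) (diagonal b) := by
  refine mem_qStab_const_iff (isUnit_diagonal.2 (Pi.isUnit_iff.2 fun i => (hbne i).isUnit))
    (fun x hx => commute_diagonal_of_commute_diagonal (fun k l h => ?_) (diagonal_pow b ℓ ▸ hx)) g
  exact (apply_eq_apply_iff_of_first_two_eq hn hb01 hbdist k l).2
    ((apply_pow_eq_apply_pow_iff_of_first_two_eq hn hb01 hbdist k l).1 h)

theorem qStab_diagonal_eq_range {n ℓ : ℕ} [NeZero ℓ] [NeZero n] (hn : 2 ≤ n) {b : Fin n → ℂ}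
    (hb01 : b 0 = b 1) (hbne : ∀ i, b i ≠ 0)
    (hbdist : ∀ i j : Fin n, i ≠ 0 → j ≠ 0 → i ≠ j → b i ^ ℓ ≠ b j ^ ℓ) :
    qStab n ℓ (fun _ => diagonal b) =
      ((Pi.constMonoidHom (Fin ℓ) _).comp (Units.map (cornerBlockDiagonal (R := ℂ) hn))).range := by
  have hblock : ∀ g : Gq n ℓ, g ∈ qStab n ℓ (fun _ => diagonal b) ↔
      (∀ i, g i = g 0) ∧ IsCornerBlockDiagonal 2 (g 0 : Matrix (Fin n) (Fin n) ℂ) := fun g => by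
    rw [mem_qStab_diagonal_iff hn hb01 hbne hbdist,
      commute_diagonal_iff_isCornerBlockDiagonal
        (apply_eq_apply_iff_of_first_two_eq hn hb01 hbdist)]
  ext g
  rw [hblock, MonoidHom.mem_range]
  constructor
  · rintro ⟨hg, hg0⟩
    have hinv := ((hblock g⁻¹).1 (inv_mem ((hblock g).2 ⟨hg, hg0⟩))).2
    obtain ⟨v, hv⟩ := (Units.mem_range_map_iff (cornerBlockDiagonal_injective hn) (g 0)).2
      ⟨(mem_range_cornerBlockDiagonal_iff hn _).2 hg0,
        (mem_range_cornerBlockDiagonal_iff hn _).2 hinv⟩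
    exact ⟨v, funext fun i => hv.trans (hg i).symm⟩
  · rintro ⟨v, rfl⟩
    exact ⟨fun _ => rfl, (mem_range_cornerBlockDiagonal_iff hn _).1 ⟨v, rfl⟩⟩

theorem stmt_15 (n ℓ : ℕ) [NeZero ℓ] [NeZero n] (hn : 2 ≤ n) (b : Fin n → ℂ)
    -- `b = diag(b₂, b₂, b₃, …, b_n)`: the first two entries agree, all entries are nonzero,
    -- and the entries from index `1` on have pairwise distinct `ℓ`-th powers
    (hb01 : b 0 = b 1)
    (hbne : ∀ i : Fin n, b i ≠ 0)
    (hbdist : ∀ i j : Fin n, i ≠ 0 → j ≠ 0 → i ≠ j → b i ^ ℓ ≠ b j ^ ℓ) :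
    -- the stabilizer of `X_b = (b, …, b)` consists exactly of the constant tuples
    -- `(g, …, g)` with `g` commuting with `b`
    (∀ g : Gq n ℓ, g ∈ qStab n ℓ (fun _ => Matrix.diagonal b) ↔
      ((∀ i j : Fin ℓ, g i = g j) ∧
        (g 0 : Matrix (Fin n) (Fin n) ℂ) * Matrix.diagonal b
          = Matrix.diagonal b * (g 0 : Matrix (Fin n) (Fin n) ℂ))) ∧
    -- such `g` are precisely the block-diagonal matrices `diag(A, t₃, …, t_n)`:
    (∀ g : Gq n ℓ, g ∈ qStab n ℓ (fun _ => Matrix.diagonal b) ↔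
      ((∀ i j : Fin ℓ, g i = g j) ∧
        (∀ k l : Fin n, k ≠ l → ¬((k : ℕ) < 2 ∧ (l : ℕ) < 2) →
          (g 0 : Matrix (Fin n) (Fin n) ℂ) k l = 0))) ∧
    -- in particular, the stabilizer is isomorphic to `GL₂(ℂ) × (ℂ^×)^{n-2}`
    Nonempty (qStab n ℓ (fun _ => Matrix.diagonal b) ≃*
      (Matrix.GeneralLinearGroup (Fin 2) ℂ × (Fin (n - 2) → ℂˣ))) := by
  have hconst (g : Gq n ℓ) : (∀ i, g i = g 0) ↔ ∀ i j, g i = g j :=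
    ⟨fun h i j => (h i).trans (h j).symm, fun h i => h i 0⟩
  refine ⟨fun g => ?_, fun g => ?_, ?_⟩
  · rw [mem_qStab_diagonal_iff hn hb01 hbne hbdist, hconst]
    rfl
  · rw [mem_qStab_diagonal_iff hn hb01 hbne hbdist, hconst,
      commute_diagonal_iff_isCornerBlockDiagonal
        (apply_eq_apply_iff_of_first_two_eq hn hb01 hbdist)]
    rfl
  · have hinj : Function.Injective
        ((Pi.constMonoidHom (Fin ℓ) _).comp (Units.map (cornerBlockDiagonal (R := ℂ) hn))) :=
      Function.const_injective.comp (Units.map_injective (cornerBlockDiagonal_injective hn))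
    rw [qStab_diagonal_eq_range hn hb01 hbne hbdist]
    exact ⟨(MonoidHom.ofInjective hinj).symm.trans
      (MulEquiv.prodUnits.trans (MulEquiv.prodCongr (MulEquiv.refl _) MulEquiv.piUnits))⟩

end
end

section
/- Let r ≥ 2 and let D = A_r(ℂ) be the Weyl algebra on the variables x₁,…,x_r. Let I be the left ideal of D generated by the operators x_i∂_j for all 1 ≤ i ≠ j ≤ r together with the operators x_i∂_i − x_j∂_j for all 1 ≤ i < j ≤ r. Then there is an isomorphism of left D-modules D/I ≅ ℂ[x₁,…,x_r] ⊕ Δ₀, where ℂ[x₁,…,x_r] ≅ D/(D∂₁ + ⋯ + D∂_r) is the polynomial module and Δ₀ = D/(Dx₁ + ⋯ + Dx_r). -/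
/-! STATEMENT 16: for `r ≥ 2` and `D = A_r(ℂ)`, let `I` be the left ideal generated by
the `x_i∂_j` (`i ≠ j`) and the `x_i∂_i - x_j∂_j` (`i < j`).  Then
`D/I ≅ ℂ[x₁,…,x_r] ⊕ Δ₀` as left `D`-modules, where `ℂ[x₁,…,x_r] ≅ D/(D∂₁+⋯+D∂_r)` is
the polynomial module and `Δ₀ = D/(Dx₁+⋯+Dx_r)`. -/

open MvPolynomial

set_option maxHeartbeats 1000000
set_option synthInstance.maxHeartbeats 400000

noncomputable section

/-- The polynomial ring `ℂ[x₀, …, x_{ℓ-1}]`. -/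
abbrev Pl (ℓ : ℕ) : Type := MvPolynomial (Fin ℓ) ℂ

/-- The multiplication operator `xᵢ`. -/
noncomputable def xop (ℓ : ℕ) (i : Fin ℓ) : Module.End ℂ (Pl ℓ) := LinearMap.mulLeft ℂ (X i)

/-- The partial derivative operator `∂ᵢ`. -/
noncomputable def dop (ℓ : ℕ) (i : Fin ℓ) : Module.End ℂ (Pl ℓ) := (pderiv i).toLinearMap

/-- The Weyl algebra `A_ℓ(ℂ)` realized concretely as the `ℂ`-subalgebra of the `ℂ`-linear
endomorphisms of `ℂ[x₀,…,x_{ℓ-1}]` generated by the multiplication operators `xᵢ` and the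
partial-derivative operators `∂ᵢ`. -/
noncomputable def Dsub (ℓ : ℕ) : Subalgebra ℂ (Module.End ℂ (Pl ℓ)) :=
  Algebra.adjoin ℂ (Set.range (xop ℓ) ∪ Set.range (dop ℓ))

/-- The Weyl algebra `D = A_ℓ(ℂ)`. -/
noncomputable def DW (ℓ : ℕ) : Type := Dsub ℓ

noncomputable instance (ℓ : ℕ) : Ring (DW ℓ) := inferInstanceAs (Ring (Dsub ℓ))
noncomputable instance (ℓ : ℕ) : Algebra ℂ (DW ℓ) := inferInstanceAs (Algebra ℂ (Dsub ℓ))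

/-- `xᵢ` as an element of the Weyl algebra. -/
noncomputable def xel (ℓ : ℕ) (i : Fin ℓ) : DW ℓ :=
  (⟨xop ℓ i, Algebra.subset_adjoin (Set.mem_union_left _ ⟨i, rfl⟩)⟩ : Dsub ℓ)

/-- `∂ᵢ` as an element of the Weyl algebra. -/
noncomputable def del (ℓ : ℕ) (i : Fin ℓ) : DW ℓ :=
  (⟨dop ℓ i, Algebra.subset_adjoin (Set.mem_union_right _ ⟨i, rfl⟩)⟩ : Dsub ℓ)

/-- `D` acts on the polynomial ring by applying endomorphisms. -/
noncomputable instance (r : ℕ) : Module (DW r) (Pl r) :=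
  inferInstanceAs (Module (Dsub r) (Pl r))

/-- The left ideal generated by the operators `x_i∂_j` (`i ≠ j`) and
`x_i∂_i - x_j∂_j` (`i < j`) — the image of `sl_r(ℂ)` acting by vector fields. -/
noncomputable def Isl (r : ℕ) : Submodule (DW r) (DW r) :=
  Submodule.span (DW r)
    ({y : DW r | ∃ i j : Fin r, i ≠ j ∧ y = xel r i * del r j} ∪
     {y : DW r | ∃ i j : Fin r, i < j ∧ y = xel r i * del r i - xel r j * del r j})

/-- `Δ₀ = D/(Dx₁ + ⋯ + Dx_r)`. -/
noncomputable abbrev Delta0 (r : ℕ) : Type :=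
  DW r ⧸ Submodule.span (DW r) (Set.range (xel r))

/-- The polynomial module `D/(D∂₁ + ⋯ + D∂_r)`. -/
noncomputable abbrev PolMod (r : ℕ) : Type :=
  DW r ⧸ Submodule.span (DW r) (Set.range (del r))

/-!
Let `E = ∑ xᵢ∂ᵢ` be the Euler operator and `u = (1/r) ∑ ∂ᵢxᵢ = 1 + E/r`. Then `u ∈ Dx₁ + ⋯ + Dx_r`
and `1 - u = -E/r ∈ D∂₁ + ⋯ + D∂_r`, while `∂ⱼu` and `xⱼ(1 - u)` lie in `I`: modulo `I` all
`xᵢ∂ⱼ` (`i ≠ j`) vanish and all `xᵢ∂ᵢ` agree, which, through an auxiliary index `k ≠ j`, takes care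
of the diagonal terms `∂ⱼ∂ⱼxⱼ` and `xⱼxⱼ∂ⱼ`. Writing `d = du + d(1 - u)` shows
`I = D∂ ∩ Dx`, and `1 = u + (1 - u)` shows `D∂ + Dx = D`, so the Chinese remainder theorem for
modules gives `D/I ≅ D/D∂ × D/Dx`.

Every operator is congruent modulo `D∂` to a multiplication operator (move the derivatives to the
right), so `d ↦ d • 1` induces `D/D∂ ≅ ℂ[x₁,…,x_r]`.
-/

namespace Submodule

variable {R M : Type*} [Ring R] [AddCommGroup M] [Module R M]

def quotientInfEquivQuotientProd (p q : Submodule R M) (hpq : p ⊔ q = ⊤) :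
    (M ⧸ p ⊓ q) ≃ₗ[R] (M ⧸ p) × (M ⧸ q) :=
  (quotEquivOfEq _ _ (by rw [LinearMap.ker_prod, ker_mkQ, ker_mkQ])).trans
    ((p.mkQ.prod q.mkQ).quotKerEquivOfSurjective <| by
      rw [← LinearMap.range_eq_top, LinearMap.range_prod_eq (by rwa [ker_mkQ, ker_mkQ]),
        range_mkQ, range_mkQ, prod_top])

theorem mul_mem_of_mem_span {S : Set R} {I : Submodule R R} {u : R} (h : ∀ s ∈ S, s * u ∈ I)
    {a : R} (ha : a ∈ span R S) : a * u ∈ I :=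
  (span_le (p := I.comap (LinearMap.toSpanSingleton R R u))).mpr h ha

theorem inf_le_of_mul_mem {I J K : Submodule R R} {u : R} (hJ : ∀ a ∈ J, a * u ∈ I)
    (hK : ∀ a ∈ K, a * (1 - u) ∈ I) : J ⊓ K ≤ I := fun a ⟨haJ, haK⟩ => by
  simpa [mul_sub] using add_mem (hJ a haJ) (hK a haK)

theorem sup_eq_top_of_mem_of_one_sub_mem {J K : Submodule R R} {u : R} (hu : u ∈ K)
    (hu' : 1 - u ∈ J) : J ⊔ K = ⊤ :=
  (Ideal.eq_top_iff_one _).mpr (by simpa using add_mem (mem_sup_left hu') (mem_sup_right hu))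

end Submodule

open Submodule

theorem MvPolynomial.pderiv_pderiv_comm {σ R : Type*} [CommSemiring R] (i j : σ)
    (p : MvPolynomial σ R) : pderiv i (pderiv j p) = pderiv j (pderiv i p) := by
  classical
  induction p using MvPolynomial.induction_on with
  | C a => simp
  | add p q hp hq => simp [hp, hq]
  | mul_X p k ih =>
    simp [ih, pderiv_X, Pi.single_apply, apply_ite (pderiv i), apply_ite (pderiv j)]
    ring

variable {r : ℕ}

theorem DW.ext_smul {a b : DW r} (h : ∀ p : Pl r, a • p = b • p) : a = b :=
  Subtype.ext (LinearMap.ext h)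

theorem lmul_mem_Dsub (p : Pl r) : Algebra.lmul ℂ (Pl r) p ∈ Dsub r := by
  have : Algebra.adjoin ℂ (Set.range X) ≤ (Dsub r).comap (Algebra.lmul ℂ (Pl r)) :=
    Algebra.adjoin_le <| by rintro _ ⟨i, rfl⟩; exact Algebra.subset_adjoin (Or.inl ⟨i, rfl⟩)
  exact this (by rw [adjoin_range_X]; trivial)

variable (r) in
def polyMul : Pl r →ₐ[ℂ] DW r := (Algebra.lmul ℂ (Pl r)).codRestrict (Dsub r) lmul_mem_Dsub

@[simp] theorem polyMul_smul (p q : Pl r) : polyMul r p • q = p * q := rfl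
@[simp] theorem xel_smul (i : Fin r) (p : Pl r) : xel r i • p = X i * p := rfl
@[simp] theorem del_smul (i : Fin r) (p : Pl r) : del r i • p = pderiv i p := rfl

theorem polyMul_X (i : Fin r) : polyMul r (X i) = xel r i := rfl

@[elab_as_elim]
theorem DW.induction_on {P : DW r → Prop} (d : DW r) (hxel : ∀ i, P (xel r i))
    (hdel : ∀ i, P (del r i)) (halg : ∀ c, P (algebraMap ℂ (DW r) c))
    (hadd : ∀ a b, P a → P b → P (a + b)) (hmul : ∀ a b, P a → P b → P (a * b)) :
    P d := by
  obtain ⟨d, hd⟩ := d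
  induction hd using Algebra.adjoin_induction with
  | mem _ hy => rcases hy with ⟨i, rfl⟩ | ⟨i, rfl⟩; exacts [hxel i, hdel i]
  | algebraMap c => exact halg c
  | add _ _ _ _ iha ihb => exact hadd _ _ iha ihb
  | mul _ _ _ _ iha ihb => exact hmul _ _ iha ihb

theorem xel_mul_comm (i j : Fin r) : xel r i * xel r j = xel r j * xel r i :=
  DW.ext_smul fun p => by simp only [mul_smul, xel_smul]; ring

theorem del_mul_comm (i j : Fin r) : del r i * del r j = del r j * del r i :=
  DW.ext_smul fun p => by simp only [mul_smul, del_smul, pderiv_pderiv_comm]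

theorem del_mul_polyMul (i : Fin r) (p : Pl r) :
    del r i * polyMul r p = polyMul r p * del r i + polyMul r (pderiv i p) :=
  DW.ext_smul fun q => by simp [mul_smul, add_smul]; ring

theorem del_mul_xel_of_ne {i j : Fin r} (h : i ≠ j) : del r j * xel r i = xel r i * del r j :=
  DW.ext_smul fun q => by simp [mul_smul, pderiv_X_of_ne h]

theorem del_mul_xel_self (i : Fin r) : del r i * xel r i = xel r i * del r i + 1 :=
  DW.ext_smul fun q => by simp [mul_smul, add_smul]

variable (r) in
abbrev delIdeal : Submodule (DW r) (DW r) := span (DW r) (Set.range (del r))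

variable (r) in
abbrev xelIdeal : Submodule (DW r) (DW r) := span (DW r) (Set.range (xel r))

variable (r) in
def euler : DW r := ∑ i, xel r i * del r i

theorem xel_mul_del_mem_Isl {i j : Fin r} (h : i ≠ j) : xel r i * del r j ∈ Isl r :=
  subset_span (Or.inl ⟨i, j, h, rfl⟩)

theorem xel_mul_del_sub_mem_Isl {i j : Fin r} (h : i ≠ j) :
    xel r i * del r i - xel r j * del r j ∈ Isl r := by
  obtain h | h := h.lt_or_gt
  · exact subset_span (Or.inr ⟨i, j, h, rfl⟩)
  · rw [← neg_sub]
    exact neg_mem (subset_span (Or.inr ⟨j, i, h, rfl⟩))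

theorem Isl_le_delIdeal : Isl r ≤ delIdeal r := by
  have hmem (a : DW r) (i : Fin r) : a * del r i ∈ delIdeal r :=
    smul_mem _ a (subset_span ⟨i, rfl⟩)
  rw [Isl, span_le]
  rintro _ (⟨i, j, -, rfl⟩ | ⟨i, j, -, rfl⟩)
  exacts [hmem _ _, sub_mem (hmem _ _) (hmem _ _)]

theorem Isl_le_xelIdeal : Isl r ≤ xelIdeal r := by
  have hmem (a : DW r) (i : Fin r) : a * xel r i ∈ xelIdeal r :=
    smul_mem _ a (subset_span ⟨i, rfl⟩)
  rw [Isl, span_le]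
  rintro _ (⟨i, j, hij, rfl⟩ | ⟨i, j, -, rfl⟩)
  · rw [← del_mul_xel_of_ne hij]
    exact hmem _ _
  · rw [show xel r i * del r i - xel r j * del r j = del r i * xel r i - del r j * xel r j by
      rw [del_mul_xel_self, del_mul_xel_self]; abel]
    exact sub_mem (hmem _ _) (hmem _ _)

theorem xel_mul_euler_mem_Isl (hr : 2 ≤ r) (j : Fin r) : xel r j * euler r ∈ Isl r := by
  have := Fin.nontrivial_iff_two_le.mpr hr
  rw [euler, Finset.mul_sum]
  refine sum_mem fun i _ => ?_
  obtain rfl | h := eq_or_ne i j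
  · obtain ⟨k, hk⟩ := exists_ne i
    have : xel r i * (xel r i * del r i) =
        xel r i * (xel r i * del r i - xel r k * del r k) + xel r k * (xel r i * del r k) := by
      rw [mul_sub, ← mul_assoc _ (xel r k), xel_mul_comm i k, mul_assoc, sub_add_cancel]
    rw [this]
    exact add_mem (smul_mem _ _ (xel_mul_del_sub_mem_Isl hk.symm))
      (smul_mem _ _ (xel_mul_del_mem_Isl hk.symm))
  · rw [← mul_assoc, xel_mul_comm, mul_assoc]
    exact smul_mem _ _ (xel_mul_del_mem_Isl h.symm)

theorem del_mul_del_mul_xel_mem_Isl (hr : 2 ≤ r) (i j : Fin r) :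
    del r j * (del r i * xel r i) ∈ Isl r := by
  have := Fin.nontrivial_iff_two_le.mpr hr
  obtain rfl | h := eq_or_ne i j
  · obtain ⟨k, hk⟩ := exists_ne i
    have : del r i * (del r i * xel r i) =
        del r i * (xel r i * del r i - xel r k * del r k) + del r k * (xel r k * del r i) :=
      DW.ext_smul fun p => by
        simp [mul_smul, sub_smul, add_smul, pderiv_X_of_ne hk, pderiv_pderiv_comm i k]
        ring
    rw [this]
    exact add_mem (smul_mem _ _ (xel_mul_del_sub_mem_Isl hk.symm))
      (smul_mem _ _ (xel_mul_del_mem_Isl hk))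
  · rw [← mul_assoc, del_mul_comm, mul_assoc, del_mul_xel_of_ne h]
    exact smul_mem _ _ (xel_mul_del_mem_Isl h)

variable (r) in
def splitElt : DW r := (r : ℂ)⁻¹ • ∑ i, del r i * xel r i

theorem sum_del_mul_xel : ∑ i, del r i * xel r i = euler r + (r : ℂ) • 1 := by
  rw [euler, Finset.sum_congr rfl fun i _ => del_mul_xel_self i, Finset.sum_add_distrib,
    Finset.sum_const, Finset.card_univ, Fintype.card_fin, ← Nat.cast_smul_eq_nsmul ℂ]

theorem one_sub_splitElt (hr : 2 ≤ r) : 1 - splitElt r = -((r : ℂ)⁻¹ • euler r) := by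
  have hr0 : (r : ℂ) ≠ 0 := Nat.cast_ne_zero.mpr (by omega)
  rw [splitElt, sum_del_mul_xel, smul_add, smul_smul, inv_mul_cancel₀ hr0, one_smul]
  abel

theorem splitElt_mem_xelIdeal : splitElt r ∈ xelIdeal r :=
  smul_of_tower_mem _ _ (sum_mem fun i _ => smul_mem _ _ (subset_span ⟨i, rfl⟩))

theorem one_sub_splitElt_mem_delIdeal (hr : 2 ≤ r) : 1 - splitElt r ∈ delIdeal r := by
  rw [one_sub_splitElt hr]
  exact neg_mem (smul_of_tower_mem _ _ (sum_mem fun i _ => smul_mem _ _ (subset_span ⟨i, rfl⟩)))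

theorem mul_splitElt_mem_Isl (hr : 2 ≤ r) {a : DW r} (ha : a ∈ delIdeal r) :
    a * splitElt r ∈ Isl r := by
  refine mul_mem_of_mem_span ?_ ha
  rintro _ ⟨j, rfl⟩
  rw [splitElt, mul_smul_comm, Finset.mul_sum]
  exact smul_of_tower_mem _ _ (sum_mem fun i _ => del_mul_del_mul_xel_mem_Isl hr i j)

theorem mul_one_sub_splitElt_mem_Isl (hr : 2 ≤ r) {a : DW r} (ha : a ∈ xelIdeal r) :
    a * (1 - splitElt r) ∈ Isl r := by
  refine mul_mem_of_mem_span ?_ ha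
  rintro _ ⟨j, rfl⟩
  rw [one_sub_splitElt hr, mul_neg, mul_smul_comm]
  exact neg_mem (smul_of_tower_mem _ _ (xel_mul_euler_mem_Isl hr j))

theorem Isl_eq_inf (hr : 2 ≤ r) : Isl r = delIdeal r ⊓ xelIdeal r :=
  le_antisymm (le_inf Isl_le_delIdeal Isl_le_xelIdeal)
    (inf_le_of_mul_mem (fun _ => mul_splitElt_mem_Isl hr)
      (fun _ => mul_one_sub_splitElt_mem_Isl hr))

theorem delIdeal_sup_xelIdeal (hr : 2 ≤ r) : delIdeal r ⊔ xelIdeal r = ⊤ :=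
  sup_eq_top_of_mem_of_one_sub_mem splitElt_mem_xelIdeal (one_sub_splitElt_mem_delIdeal hr)

theorem mk_polyMul_surjective :
    Function.Surjective fun p : Pl r => (Submodule.Quotient.mk (polyMul r p) : PolMod r) := by
  suffices h : ∀ (d : DW r) (q : Pl r), ∃ p : Pl r,
      (Submodule.Quotient.mk (d * polyMul r q) : PolMod r) =
        Submodule.Quotient.mk (polyMul r p) by
    intro m
    obtain ⟨d, rfl⟩ := Submodule.Quotient.mk_surjective _ m
    obtain ⟨p, hp⟩ := h d 1
    exact ⟨p, by simpa using hp.symm⟩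
  intro d
  induction d using DW.induction_on with
  | hxel i => exact fun q => ⟨X i * q, by rw [map_mul, polyMul_X]⟩
  | hdel i =>
    refine fun q => ⟨pderiv i q, (Submodule.Quotient.eq _).mpr ?_⟩
    rw [del_mul_polyMul, add_sub_cancel_right]
    exact smul_mem _ _ (subset_span ⟨i, rfl⟩)
  | halg c => exact fun q => ⟨C c * q, by rw [map_mul, ← algebraMap_eq, AlgHom.commutes]⟩
  | hadd a b ha hb =>
    intro q
    obtain ⟨p₁, h₁⟩ := ha q
    obtain ⟨p₂, h₂⟩ := hb q
    exact ⟨p₁ + p₂, by rw [add_mul, Quotient.mk_add, h₁, h₂, map_add, Quotient.mk_add]⟩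
  | hmul a b ha hb =>
    intro q
    obtain ⟨p₁, h₁⟩ := hb q
    obtain ⟨p₂, h₂⟩ := ha p₁
    refine ⟨p₂, ?_⟩
    rw [mul_assoc, ← smul_eq_mul a, Quotient.mk_smul, h₁, ← Quotient.mk_smul, smul_eq_mul,
      h₂]

variable (r) in
def polModEquiv : PolMod r ≃ₗ[DW r] Pl r := by
  let μ := (delIdeal r).liftQ (LinearMap.toSpanSingleton (DW r) (Pl r) 1) <| span_le.mpr <| by
    rintro _ ⟨i, rfl⟩
    simp
  have hμ : Function.LeftInverse μ fun p => Submodule.Quotient.mk (polyMul r p) := fun p => by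
    simp [μ]
  exact .ofBijective μ ⟨(hμ.rightInverse_of_surjective mk_polyMul_surjective).injective,
    hμ.surjective⟩

theorem stmt_16 (r : ℕ) (hr : 2 ≤ r) :
    -- `D/I ≅ ℂ[x₁,…,x_r] ⊕ Δ₀`
    Nonempty ((DW r ⧸ Isl r) ≃ₗ[DW r] (PolMod r × Delta0 r)) ∧
    -- where `D/(D∂₁+⋯+D∂_r)` is the polynomial module `ℂ[x₁,…,x_r]`
    Nonempty (PolMod r ≃ₗ[DW r] Pl r) :=
  ⟨⟨(quotEquivOfEq _ _ (Isl_eq_inf hr)).trans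
      (quotientInfEquivQuotientProd _ _ (delIdeal_sup_xelIdeal hr))⟩,
    ⟨polModEquiv r⟩⟩

end
end

section
/- Let U be a ring and H a right U-module whose endomorphism ring E = End_U(H) is a simple ring. Then H is a projective right U-module if and only if there exist h ∈ H and a right U-module homomorphism φ : H → U such that the endomorphism x ↦ h·φ(x) of H is nonzero. Moreover, when these equivalent conditions hold, H is a finitely generated projective right U-module. -/
/-!
The maps `x ↦ φ(x) • h` with `φ ∈ M* = Hom(M, R)` are closed under composition with arbitrary
endomorphisms on either side, so their additive span is a two-sided ideal of `End_R(M)`. If one of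
them is nonzero, simplicity forces this ideal to contain `1`, i.e. `1 = ∑ φᵢ(·) • hᵢ` is a finite
dual basis, which exhibits `M` as a direct summand of `Rⁿ`. Conversely, if `M` is projective, the
dual basis lemma writes every `x` as `∑ φᵢ(x) • hᵢ`, so these maps cannot all vanish unless
`M = 0`, which is excluded because a simple ring is nontrivial. A right `U`-module is a left
`Uᵐᵒᵖ`-module, and `op` identifies `Hom(H, U)` with its dual.
-/

open MulOpposite

theorem LinearMap.comp_smulRight {R M M₁ N : Type*} [Semiring R] [AddCommMonoid M]
    [AddCommMonoid M₁] [AddCommMonoid N] [Module R M] [Module R M₁] [Module R N]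
    (f : M →ₗ[R] N) (φ : M₁ →ₗ[R] R) (h : M) : f ∘ₗ φ.smulRight h = φ.smulRight (f h) := by
  ext x
  simp

namespace Module

section Semiring

variable {R M : Type*} [Semiring R] [AddCommMonoid M] [Module R M]

theorem finite_and_projective_of_sum_smulRight_eq_one {ι : Type*} [Fintype ι]
    (h : ι → M) (φ : ι → Dual R M) (hsum : ∑ i, (φ i).smulRight (h i) = 1) :
    Module.Finite R M ∧ Projective R M := by
  let π := Fintype.linearCombination R h
  let σ := LinearMap.pi φ
  have hsplit : π ∘ₗ σ = LinearMap.id := by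
    ext x
    simpa [π, σ, Fintype.linearCombination_apply] using LinearMap.congr_fun hsum x
  exact ⟨.of_surjective π fun x => ⟨σ x, LinearMap.congr_fun hsplit x⟩, .of_split σ π hsplit⟩

theorem Projective.exists_smulRight_ne_zero [Projective R M] [Nontrivial M] :
    ∃ (h : M) (φ : Dual R M), φ.smulRight h ≠ 0 := by
  obtain ⟨s, hs⟩ := projective_def'.1 ‹Projective R M›
  obtain ⟨x, hx⟩ := exists_ne (0 : M)
  by_contra! hzero
  have hsx := LinearMap.congr_fun hs x
  simp only [LinearMap.comp_apply, Finsupp.linearCombination_apply, LinearMap.id_apply] at hsx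
  apply hx
  rw [← hsx]
  refine Finset.sum_eq_zero fun y _ => ?_
  simpa using LinearMap.congr_fun (hzero y (Finsupp.lapply y ∘ₗ s)) x

end Semiring

section Ring

variable {R M : Type*} [Ring R] [AddCommGroup M] [Module R M]

variable (R M) in
def rankOneEnds : Set (End R M) := Set.range fun p : M × Dual R M => p.2.smulRight p.1

theorem mem_span_rankOneEnds_iff {f : End R M} :
    f ∈ TwoSidedIdeal.span (rankOneEnds R M) ↔ f ∈ AddSubgroup.closure (rankOneEnds R M) := by
  refine TwoSidedIdeal.mem_span_iff_mem_addSubgroup_closure_absorbing ?_ ?_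
  · rintro f - ⟨⟨h, φ⟩, rfl⟩
    exact ⟨⟨f h, φ⟩, (LinearMap.comp_smulRight f φ h).symm⟩
  · rintro - f ⟨⟨h, φ⟩, rfl⟩
    exact ⟨⟨h, φ ∘ₗ f⟩, rfl⟩

theorem finite_and_projective_of_one_mem_span_rankOneEnds
    (h1 : (1 : End R M) ∈ TwoSidedIdeal.span (rankOneEnds R M)) :
    Module.Finite R M ∧ Projective R M := by
  rw [mem_span_rankOneEnds_iff, rankOneEnds, AddSubgroup.mem_closure_range_iff] at h1
  obtain ⟨a, ha⟩ := h1
  refine finite_and_projective_of_sum_smulRight_eq_one (ι := a.support)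
    (fun p => a p • p.1.1) (fun p => p.1.2) ?_
  rw [ha, Finsupp.sum, ← Finset.sum_coe_sort a.support]
  refine Fintype.sum_congr _ _ fun p => ?_
  ext x
  exact smul_comm _ _ _

variable [IsSimpleRing (End R M)]

theorem finite_and_projective_of_smulRight_ne_zero {h : M} {φ : Dual R M}
    (hne : φ.smulRight h ≠ 0) : Module.Finite R M ∧ Projective R M := by
  apply finite_and_projective_of_one_mem_span_rankOneEnds
  have hspan : TwoSidedIdeal.span (rankOneEnds R M) ≠ ⊥ := by
    intro hbot
    apply hne
    rw [← TwoSidedIdeal.mem_bot, ← hbot]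
    exact TwoSidedIdeal.subset_span ⟨⟨h, φ⟩, rfl⟩
  rw [(IsSimpleRing.simple.eq_bot_or_eq_top _).resolve_left hspan]
  exact TwoSidedIdeal.mem_top _

theorem projective_iff_exists_smulRight_ne_zero :
    Projective R M ↔ ∃ (h : M) (φ : Dual R M), φ.smulRight h ≠ 0 := by
  refine ⟨fun _ => ?_, fun ⟨_, _, hne⟩ => (finite_and_projective_of_smulRight_ne_zero hne).2⟩
  have : Nontrivial M := by
    by_contra! _
    exact not_subsingleton (End R M) inferInstance
  exact Projective.exists_smulRight_ne_zero

end Ring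

end Module

theorem exists_op_smul_ne_zero_iff_exists_smulRight_ne_zero {U H : Type*} [Ring U]
    [AddCommGroup H] [Module Uᵐᵒᵖ H] :
    (∃ (h : H) (φ : H →ₗ[Uᵐᵒᵖ] U) (x : H), op (φ x) • h ≠ 0) ↔
      ∃ (h : H) (ψ : Module.Dual Uᵐᵒᵖ H), ψ.smulRight h ≠ 0 := by
  let e : U ≃ₗ[Uᵐᵒᵖ] Uᵐᵒᵖ := opLinearEquiv Uᵐᵒᵖ
  simp only [ne_eq, LinearMap.ext_iff, not_forall]
  constructor
  · rintro ⟨h, φ, x, hx⟩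
    exact ⟨h, e.toLinearMap ∘ₗ φ, x, hx⟩
  · rintro ⟨h, ψ, x, hx⟩
    exact ⟨h, e.symm.toLinearMap ∘ₗ ψ, x, hx⟩

theorem stmt_18 {U : Type*} [Ring U] (H : Type*) [AddCommGroup H] [Module Uᵐᵒᵖ H]
    -- the endomorphism ring `E = End_U(H)` is a simple ring
    [IsSimpleRing (Module.End Uᵐᵒᵖ H)] :
    -- `H` is projective iff some `x ↦ h·φ(x)` is a nonzero endomorphism
    (Module.Projective Uᵐᵒᵖ H ↔
      ∃ (h : H) (φ : H →ₗ[Uᵐᵒᵖ] U), ∃ x : H, op (φ x) • h ≠ 0) ∧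
    -- and when these equivalent conditions hold, `H` is finitely generated projective
    ((∃ (h : H) (φ : H →ₗ[Uᵐᵒᵖ] U), ∃ x : H, op (φ x) • h ≠ 0) →
      Module.Finite Uᵐᵒᵖ H ∧ Module.Projective Uᵐᵒᵖ H) := by
  rw [exists_op_smul_ne_zero_iff_exists_smulRight_ne_zero]
  exact ⟨Module.projective_iff_exists_smulRight_ne_zero,
    fun ⟨_, _, hne⟩ => Module.finite_and_projective_of_smulRight_ne_zero hne⟩
end
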